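/- arXiv:2602.10591 — 11 statements merged into one kernel-verified Lean document; each statement's English description precedes it below -/
import Mathlib

section
/- The characteristic polynomial of the matrix 𝒜 equals (λ − λ₁)(λ − λ₂)(λ − λ₃); equivalently, the eigenvalues of 𝒜 (with multiplicity) are exactly λ₁ = −νp₀, λ₂ = −νp₀ + i·h/√p₀ and λ₃ = −νp₀ − i·h/√p₀. -/
open Polynomial

/-- The characteristic polynomial of the Fourier symbol matrix `𝒜` of the linearized
simple-zero-mode system of the 3D rotating Boussinesq equations equals
`(X − λ₁)(X − λ₂)(X − λ₃)` with `λ₁ = −νp₀`, `λ₂ = −νp₀ + i·h/√p₀`, `λ₃ = −νp₀ − i·h/√p₀`. -/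
theorem stmt_1 (ν α β : ℝ) (hν : 0 < ν) (hα : 0 < α) (hB : 0 < β * (β - 1))
    (η : ℝ) (l : ℤ) (hl : l ≠ 0)
    (p₀ h : ℝ)
    (hp₀ : p₀ = η ^ 2 + (l : ℝ) ^ 2)
    (hh : h = Real.sqrt (α ^ 2 * η ^ 2 + β * (β - 1) * (l : ℝ) ^ 2))
    (A : Matrix (Fin 3) (Fin 3) ℂ)
    (hA : A = !![((-(ν * p₀) : ℝ) : ℂ), ((β - 1 : ℝ) : ℂ), 0;
                 ((-(β * (l : ℝ) ^ 2 / p₀) : ℝ) : ℂ), ((-(ν * p₀) : ℝ) : ℂ),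
                   ((α * η * (l : ℝ) / p₀ : ℝ) : ℂ);
                 0, ((-(α * η / (l : ℝ)) : ℝ) : ℂ), ((-(ν * p₀) : ℝ) : ℂ)])
    (lam₁ lam₂ lam₃ : ℂ)
    (hlam₁ : lam₁ = ((-(ν * p₀) : ℝ) : ℂ))
    (hlam₂ : lam₂ = ((-(ν * p₀) : ℝ) : ℂ) + Complex.I * ((h / Real.sqrt p₀ : ℝ) : ℂ))
    (hlam₃ : lam₃ = ((-(ν * p₀) : ℝ) : ℂ) - Complex.I * ((h / Real.sqrt p₀ : ℝ) : ℂ)) :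
    A.charpoly = (X - C lam₁) * (X - C lam₂) * (X - C lam₃) := by
  have hl' : ((l:ℝ)) ≠ 0 := Int.cast_ne_zero.mpr hl
  have hl2 : (0:ℝ) < (l:ℝ)^2 := by positivity
  have hp₀pos : 0 < p₀ := by rw [hp₀]; nlinarith [sq_nonneg η]
  have hs : Real.sqrt p₀ ≠ 0 := Real.sqrt_ne_zero'.mpr hp₀pos
  have hs2 : (Real.sqrt p₀) ^ 2 = p₀ := Real.sq_sqrt hp₀pos.le
  have hh2 : h ^ 2 = α ^ 2 * η ^ 2 + β * (β - 1) * (l : ℝ) ^ 2 := by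
    rw [hh]; exact Real.sq_sqrt (by positivity)
  subst hA hlam₁ hlam₂ hlam₃
  rw [Matrix.charpoly, Matrix.det_fin_three]
  simp (config := { decide := true }) [Matrix.charmatrix_apply_eq,
    Matrix.charmatrix_apply_ne]
  have hsC : ((Real.sqrt p₀ : ℝ) : ℂ) ≠ 0 := by exact_mod_cast hs
  have hlC : ((l : ℤ) : ℂ) ≠ 0 := Int.cast_ne_zero.mpr hl
  have hpC : ((p₀ : ℝ) : ℂ) ≠ 0 := by exact_mod_cast hp₀pos.ne'
  have hp2C : ((Real.sqrt p₀ : ℝ) : ℂ) ^ 2 = ((p₀ : ℝ) : ℂ) := by exact_mod_cast hs2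
  have hh2C : ((h : ℝ) : ℂ) ^ 2 = ((α:ℝ):ℂ) ^ 2 * ((η:ℝ):ℂ) ^ 2 + ((β:ℝ):ℂ) * (((β:ℝ):ℂ) - 1) * ((l:ℤ):ℂ) ^ 2 := by
    exact_mod_cast congrArg (Complex.ofReal) hh2
  have k : (((α:ℝ):ℂ) * ((η:ℝ):ℂ) * ((l:ℤ):ℂ) / ((p₀:ℝ):ℂ)) * (((α:ℝ):ℂ) * ((η:ℝ):ℂ) / ((l:ℤ):ℂ))
      + (((β:ℝ):ℂ) - 1) * (((β:ℝ):ℂ) * ((l:ℤ):ℂ) ^ 2 / ((p₀:ℝ):ℂ))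
      = -(Complex.I * (((h:ℝ):ℂ) / ((Real.sqrt p₀ : ℝ):ℂ))) ^ 2 := by
    have e : -(Complex.I * (((h:ℝ):ℂ) / ((Real.sqrt p₀ : ℝ):ℂ))) ^ 2
        = ((h:ℝ):ℂ) ^ 2 / ((Real.sqrt p₀ : ℝ):ℂ) ^ 2 := by
      rw [mul_pow, Complex.I_sq]; ring
    rw [e, hp2C, hh2C, div_mul_div_comm]
    field_simp
  have hCk := congrArg Polynomial.C k
  simp only [map_add, map_mul, map_sub, map_neg, map_pow, map_one] at hCk
  linear_combination (Polynomial.X + Polynomial.C ((ν:ℝ):ℂ) * Polynomial.C ((p₀:ℝ):ℂ)) * hCk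
end

section
/- The vectors 𝒱₁ = (αη/l, 0, β)ᵀ, 𝒱₂ = (i(1−β), h/√p₀, iαη/l)ᵀ and 𝒱₃ = (i(β−1), h/√p₀, −iαη/l)ᵀ satisfy (λᵢ·I − 𝒜)·𝒱ᵢ = 0 for i = 1, 2, 3; that is, 𝒱ᵢ is an eigenvector of 𝒜 for the eigenvalue λᵢ. -/
/-!
Write `𝒜 = -νp₀ • 1 + N` where `N = !![0, a, 0; b, 0, c; 0, d, 0]`. Such an `N` kills every
`(x, 0, z)` with `b x + c z = 0`, and `(a, μ, d)` is an eigenvector of `N` for `μ` as soon as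
`μ² = ab + cd`. Here `ab + cd = -h²/p₀`, so `μ = ±i h/√p₀`, and `𝒱₂`, `𝒱₃` are `∓i`
times `(a, ±i h/√p₀, d)`.
-/

namespace Matrix

variable {R : Type*} [CommRing R]

theorem mulVec_checkerboard_of_kernel {a b c d x z : R} (h : b * x + c * z = 0) :
    !![0, a, 0; b, 0, c; 0, d, 0] *ᵥ ![x, 0, z] = 0 := by
  ext i; fin_cases i <;> simp [mulVec, dotProduct, Fin.sum_univ_three, h]

theorem mulVec_checkerboard_eigen {a b c d μ : R} (hμ : μ ^ 2 = a * b + c * d) :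
    !![0, a, 0; b, 0, c; 0, d, 0] *ᵥ ![a, μ, d] = μ • ![a, μ, d] := by
  ext i; fin_cases i <;> simp [mulVec, dotProduct, Fin.sum_univ_three, mul_comm, ← sq, hμ]

theorem smul_one_sub_mulVec_eq_zero {n : Type*} [Fintype n] [DecidableEq n] {N : Matrix n n R}
    {v : n → R} {lam s μ : R} (hlam : lam = s + μ) (hv : N *ᵥ v = μ • v) :
    (lam • (1 : Matrix n n R) - (s • 1 + N)) *ᵥ v = 0 := by
  rw [hlam, sub_mulVec, add_mulVec, hv, smul_mulVec, smul_mulVec, one_mulVec, add_smul]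
  abel

theorem mulVec_smul_of_mulVec_eq_smul {n : Type*} [Fintype n] {N : Matrix n n R} {v : n → R}
    {μ : R} (hv : N *ᵥ v = μ • v) (k : R) : N *ᵥ (k • v) = μ • (k • v) := by
  rw [mulVec_smul, hv, smul_comm]

end Matrix

open Matrix

theorem sq_div_sqrt_eq_neg_offDiag_products {α β η l p₀ h : ℝ} (hl : l ≠ 0) (hp₀ : 0 ≤ p₀)
    (hB : 0 ≤ β * (β - 1)) (hh : h = √(α ^ 2 * η ^ 2 + β * (β - 1) * l ^ 2)) :
    (h / √p₀) ^ 2 = -((β - 1) * -(β * l ^ 2 / p₀) + α * η * l / p₀ * -(α * η / l)) := by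
  rw [div_pow, Real.sq_sqrt hp₀, hh, Real.sq_sqrt (by positivity)]
  field_simp
  ring

theorem stmt_2_general (ν α β : ℝ) (hB : 0 < β * (β - 1))
    (η : ℝ) (l : ℤ) (hl : l ≠ 0)
    (p₀ h : ℝ)
    (hp₀ : p₀ = η ^ 2 + (l : ℝ) ^ 2)
    (hh : h = Real.sqrt (α ^ 2 * η ^ 2 + β * (β - 1) * (l : ℝ) ^ 2))
    (A : Matrix (Fin 3) (Fin 3) ℂ)
    (hA : A = !![((-(ν * p₀) : ℝ) : ℂ), ((β - 1 : ℝ) : ℂ), 0;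
                 ((-(β * (l : ℝ) ^ 2 / p₀) : ℝ) : ℂ), ((-(ν * p₀) : ℝ) : ℂ),
                   ((α * η * (l : ℝ) / p₀ : ℝ) : ℂ);
                 0, ((-(α * η / (l : ℝ)) : ℝ) : ℂ), ((-(ν * p₀) : ℝ) : ℂ)])
    (lam₁ lam₂ lam₃ : ℂ)
    (hlam₁ : lam₁ = ((-(ν * p₀) : ℝ) : ℂ))
    (hlam₂ : lam₂ = ((-(ν * p₀) : ℝ) : ℂ) + Complex.I * ((h / Real.sqrt p₀ : ℝ) : ℂ))
    (hlam₃ : lam₃ = ((-(ν * p₀) : ℝ) : ℂ) - Complex.I * ((h / Real.sqrt p₀ : ℝ) : ℂ))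
    (V₁ V₂ V₃ : Fin 3 → ℂ)
    (hV₁ : V₁ = ![((α * η / (l : ℝ) : ℝ) : ℂ), 0, ((β : ℝ) : ℂ)])
    (hV₂ : V₂ = ![Complex.I * ((1 - β : ℝ) : ℂ), ((h / Real.sqrt p₀ : ℝ) : ℂ),
                  Complex.I * ((α * η / (l : ℝ) : ℝ) : ℂ)])
    (hV₃ : V₃ = ![Complex.I * ((β - 1 : ℝ) : ℂ), ((h / Real.sqrt p₀ : ℝ) : ℂ),
                  -(Complex.I * ((α * η / (l : ℝ) : ℝ) : ℂ))]) :
    (lam₁ • (1 : Matrix (Fin 3) (Fin 3) ℂ) - A).mulVec V₁ = 0 ∧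
    (lam₂ • (1 : Matrix (Fin 3) (Fin 3) ℂ) - A).mulVec V₂ = 0 ∧
    (lam₃ • (1 : Matrix (Fin 3) (Fin 3) ℂ) - A).mulVec V₃ = 0 := by
  set s : ℂ := ((-(ν * p₀) : ℝ) : ℂ)
  set a : ℝ := β - 1
  set b : ℝ := -(β * (l : ℝ) ^ 2 / p₀)
  set c : ℝ := α * η * (l : ℝ) / p₀
  set d : ℝ := -(α * η / (l : ℝ))
  set ω : ℝ := h / √p₀
  set N : Matrix (Fin 3) (Fin 3) ℂ := !![0, (a : ℂ), 0; (b : ℂ), 0, (c : ℂ); 0, (d : ℂ), 0]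
  have hl' : (l : ℝ) ≠ 0 := by exact_mod_cast hl
  have hAN : A = s • 1 + N := by
    subst hA; ext i j; fin_cases i <;> fin_cases j <;> simp [N]
  have hω : ω ^ 2 = -(a * b + c * d) :=
    sq_div_sqrt_eq_neg_offDiag_products hl' (hp₀ ▸ by positivity) hB.le hh
  have hIω : (Complex.I * ω) ^ 2 = a * b + c * d := by
    rw [mul_pow, Complex.I_sq, neg_one_mul]
    exact_mod_cast (by linarith [hω] : -ω ^ 2 = a * b + c * d)
  have hker : b * (α * η / l) + c * β = 0 := by
    simp only [b, c]; field_simp; ring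
  have hV₁N : N *ᵥ V₁ = (0 : ℂ) • V₁ := by
    rw [zero_smul, hV₁]
    exact mulVec_checkerboard_of_kernel (by exact_mod_cast hker)
  have hV₂N : N *ᵥ V₂ = (Complex.I * ω) • V₂ := by
    have : V₂ = (-Complex.I) • ![(a : ℂ), Complex.I * ω, d] := by
      rw [hV₂]; ext i; fin_cases i <;> simp [a, d, ← mul_assoc]; ring
    rw [this]; exact mulVec_smul_of_mulVec_eq_smul (mulVec_checkerboard_eigen hIω) _
  have hV₃N : N *ᵥ V₃ = (-(Complex.I * ω)) • V₃ := by
    have : V₃ = Complex.I • ![(a : ℂ), -(Complex.I * ω), d] := by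
      rw [hV₃]; ext i; fin_cases i <;> simp [a, d, ← mul_assoc]
    have hIω' : (-(Complex.I * ω)) ^ 2 = a * b + c * d := by rw [neg_sq]; exact hIω
    rw [this]; exact mulVec_smul_of_mulVec_eq_smul (mulVec_checkerboard_eigen hIω') _
  rw [hAN]
  exact ⟨smul_one_sub_mulVec_eq_zero (hlam₁.trans (add_zero s).symm) hV₁N,
    smul_one_sub_mulVec_eq_zero hlam₂ hV₂N,
    smul_one_sub_mulVec_eq_zero (hlam₃.trans (sub_eq_add_neg _ _)) hV₃N⟩

/-- The vectors `𝒱₁ = (αη/l, 0, β)`, `𝒱₂ = (i(1−β), h/√p₀, iαη/l)`,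
`𝒱₃ = (i(β−1), h/√p₀, −iαη/l)` are eigenvectors of the symbol matrix `𝒜` of the
linearized simple-zero-mode system for the eigenvalues `λ₁, λ₂, λ₃`:
`(λᵢ·I − 𝒜)·𝒱ᵢ = 0` for `i = 1, 2, 3`. -/
theorem stmt_2 (ν α β : ℝ) (hν : 0 < ν) (hα : 0 < α) (hB : 0 < β * (β - 1))
    (η : ℝ) (l : ℤ) (hl : l ≠ 0)
    (p₀ h : ℝ)
    (hp₀ : p₀ = η ^ 2 + (l : ℝ) ^ 2)
    (hh : h = Real.sqrt (α ^ 2 * η ^ 2 + β * (β - 1) * (l : ℝ) ^ 2))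
    (A : Matrix (Fin 3) (Fin 3) ℂ)
    (hA : A = !![((-(ν * p₀) : ℝ) : ℂ), ((β - 1 : ℝ) : ℂ), 0;
                 ((-(β * (l : ℝ) ^ 2 / p₀) : ℝ) : ℂ), ((-(ν * p₀) : ℝ) : ℂ),
                   ((α * η * (l : ℝ) / p₀ : ℝ) : ℂ);
                 0, ((-(α * η / (l : ℝ)) : ℝ) : ℂ), ((-(ν * p₀) : ℝ) : ℂ)])
    (lam₁ lam₂ lam₃ : ℂ)
    (hlam₁ : lam₁ = ((-(ν * p₀) : ℝ) : ℂ))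
    (hlam₂ : lam₂ = ((-(ν * p₀) : ℝ) : ℂ) + Complex.I * ((h / Real.sqrt p₀ : ℝ) : ℂ))
    (hlam₃ : lam₃ = ((-(ν * p₀) : ℝ) : ℂ) - Complex.I * ((h / Real.sqrt p₀ : ℝ) : ℂ))
    (V₁ V₂ V₃ : Fin 3 → ℂ)
    (hV₁ : V₁ = ![((α * η / (l : ℝ) : ℝ) : ℂ), 0, ((β : ℝ) : ℂ)])
    (hV₂ : V₂ = ![Complex.I * ((1 - β : ℝ) : ℂ), ((h / Real.sqrt p₀ : ℝ) : ℂ),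
                  Complex.I * ((α * η / (l : ℝ) : ℝ) : ℂ)])
    (hV₃ : V₃ = ![Complex.I * ((β - 1 : ℝ) : ℂ), ((h / Real.sqrt p₀ : ℝ) : ℂ),
                  -(Complex.I * ((α * η / (l : ℝ) : ℝ) : ℂ))]) :
    (lam₁ • (1 : Matrix (Fin 3) (Fin 3) ℂ) - A).mulVec V₁ = 0 ∧
    (lam₂ • (1 : Matrix (Fin 3) (Fin 3) ℂ) - A).mulVec V₂ = 0 ∧
    (lam₃ • (1 : Matrix (Fin 3) (Fin 3) ℂ) - A).mulVec V₃ = 0 :=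
  stmt_2_general ν α β hB η l hl p₀ h hp₀ hh A hA lam₁ lam₂ lam₃ hlam₁ hlam₂ hlam₃ V₁ V₂ V₃ hV₁ hV₂
    hV₃
end

section
/- Let 𝒫 := [𝒱₁ 𝒱₂ 𝒱₃] be the 3×3 complex matrix whose columns are 𝒱₁ = (αη/l, 0, β)ᵀ, 𝒱₂ = (i(1−β), h/√p₀, iαη/l)ᵀ and 𝒱₃ = (i(β−1), h/√p₀, −iαη/l)ᵀ. Then det(𝒫) = −2i·h³/(l²·√p₀). -/
/-- The matrix `𝒫 = [𝒱₁ 𝒱₂ 𝒱₃]` whose columns are the eigenvectors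
`𝒱₁ = (αη/l, 0, β)ᵀ`, `𝒱₂ = (i(1−β), h/√p₀, iαη/l)ᵀ`, `𝒱₃ = (i(β−1), h/√p₀, −iαη/l)ᵀ`
has determinant `det(𝒫) = −2i·h³/(l²·√p₀)`. -/
theorem stmt_3 (α β : ℝ) (hα : 0 < α) (hB : 0 < β * (β - 1))
    (η : ℝ) (l : ℤ) (hl : l ≠ 0)
    (p₀ h : ℝ)
    (hp₀ : p₀ = η ^ 2 + (l : ℝ) ^ 2)
    (hh : h = Real.sqrt (α ^ 2 * η ^ 2 + β * (β - 1) * (l : ℝ) ^ 2))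
    (P : Matrix (Fin 3) (Fin 3) ℂ)
    (hP : P = !![((α * η / (l : ℝ) : ℝ) : ℂ), Complex.I * ((1 - β : ℝ) : ℂ),
                   Complex.I * ((β - 1 : ℝ) : ℂ);
                 0, ((h / Real.sqrt p₀ : ℝ) : ℂ), ((h / Real.sqrt p₀ : ℝ) : ℂ);
                 ((β : ℝ) : ℂ), Complex.I * ((α * η / (l : ℝ) : ℝ) : ℂ),
                   -(Complex.I * ((α * η / (l : ℝ) : ℝ) : ℂ))]) :
    P.det = -2 * Complex.I * ((h ^ 3 / ((l : ℝ) ^ 2 * Real.sqrt p₀) : ℝ) : ℂ) := by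
  have hl' : (l : ℝ) ≠ 0 := Int.cast_ne_zero.mpr hl
  have harg : 0 ≤ α ^ 2 * η ^ 2 + β * (β - 1) * (l : ℝ) ^ 2 := by positivity
  have hsq : h ^ 2 = α ^ 2 * η ^ 2 + β * (β - 1) * (l : ℝ) ^ 2 := by
    rw [hh]; exact Real.sq_sqrt harg
  have hs : (0:ℝ) < Real.sqrt p₀ := by
    rw [hp₀]; apply Real.sqrt_pos.mpr; positivity
  subst hP
  rw [Matrix.det_fin_three]
  simp only [Matrix.cons_val', Matrix.cons_val_zero, Matrix.cons_val_one, Matrix.head_cons,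
    Matrix.cons_val_two, Matrix.tail_cons, Matrix.head_fin_const, Matrix.of_apply,
    Matrix.cons_val_fin_one, Matrix.empty_val']
  have key : h ^ 3 / ((l:ℝ) ^ 2 * Real.sqrt p₀)
      = (h / Real.sqrt p₀) * ((α * η / (l:ℝ)) ^ 2 + β * (β - 1)) := by
    field_simp
    rw [show h^3 = h * h^2 by ring, hsq]; ring
  rw [key]
  push_cast
  ring
end

section
/- Let a₁, a₂, a₃ ∈ ℂ and define x₁, x₂, x₃ : ℝ → ℂ by: x₁(t) = [α²η²/h²·e^{λ₁t} + B·l²/(2h²)·(e^{λ₂t}+e^{λ₃t})]·a₁ + [i(β−1)√p₀/(2h)·(e^{λ₃t}−e^{λ₂t})]·a₂ + [α(β−1)ηl/h²·e^{λ₁t} − α(β−1)ηl/(2h²)·(e^{λ₂t}+e^{λ₃t})]·a₃; x₂(t) = [iβl²/(2h√p₀)·(e^{λ₂t}−e^{λ₃t})]·a₁ + (1/2)(e^{λ₂t}+e^{λ₃t})·a₂ + [iαηl/(2h√p₀)·(e^{λ₃t}−e^{λ₂t})]·a₃; x₃(t) = [αβηl/h²·e^{λ₁t} − αβηl/(2h²)·(e^{λ₂t}+e^{λ₃t})]·a₁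 + [iαη√p₀/(2hl)·(e^{λ₂t}−e^{λ₃t})]·a₂ + [B·l²/h²·e^{λ₁t} + α²η²/(2h²)·(e^{λ₂t}+e^{λ₃t})]·a₃. Then x(0) = (a₁, a₂, a₃), and for every t ∈ ℝ the vector x(t) = (x₁(t), x₂(t), x₃(t)) satisfies x′(t) = 𝒜·x(t). -/
set_option maxHeartbeats 1600000

lemma algrow1 (ν α β η l h s p E1 E2 E3 a1 a2 a3 i : ℂ)
    (hh : h ≠ 0) (hs : s ≠ 0) (hl : l ≠ 0)
    (hi : i^2 = -1) (hs2 : s^2 = p)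
    (hH : h^2 = α^2*η^2 + β*(β-1)*l^2) :
    -(ν*p) * ((α^2*η^2/h^2 * E1 + β*(β-1)*l^2/(2*h^2) * (E2+E3)) * a1
      + (i * ((β-1)*s/(2*h)) * (E3-E2)) * a2
      + (α*(β-1)*η*l/h^2 * E1 - α*(β-1)*η*l/(2*h^2) * (E2+E3)) * a3)
    + (β-1) * ((i * (β*l^2/(2*h*s)) * (E2-E3)) * a1 + (1/2 * (E2+E3)) * a2
      + (i*(α*η*l/(2*h*s))*(E3-E2)) * a3)
    = ((α^2*η^2/h^2)*a1 + (α*(β-1)*η*l/h^2)*a3) * (-(ν*p)*E1)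
    + ((β*(β-1)*l^2/(2*h^2))*a1 - i*((β-1)*s/(2*h))*a2 - (α*(β-1)*η*l/(2*h^2))*a3) * ((-(ν*p)+i*(h/s))*E2)
    + ((β*(β-1)*l^2/(2*h^2))*a1 + i*((β-1)*s/(2*h))*a2 - (α*(β-1)*η*l/(2*h^2))*a3) * ((-(ν*p)-i*(h/s))*E3) := by
  have hc1 : h * h⁻¹ = 1 := mul_inv_cancel₀ hh
  have hc2 : s * s⁻¹ = 1 := mul_inv_cancel₀ hs
  have hc3 : l * l⁻¹ = 1 := mul_inv_cancel₀ hl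
  subst hs2
  linear_combination ((-1/2)*h^3*s^2*E3*a2*h⁻¹^3*s⁻¹^2 + (-1/2)*h^3*s^2*E2*a2*h⁻¹^3*s⁻¹^2 + (1/2)*β*h^3*s^2*E3*a2*h⁻¹^3*s⁻¹^2 + (1/2)*β*h^3*s^2*E2*a2*h⁻¹^3*s⁻¹^2) * hi + ((1/2)*s*E3*a2*s⁻¹ + (1/2)*s*E2*a2*s⁻¹ + (1/2)*h*s*E3*a2*h⁻¹*s⁻¹ + (1/2)*h*s*E2*a2*h⁻¹*s⁻¹ + (1/2)*h*s^2*E3*a2*i^2*h⁻¹*s⁻¹^2 + (1/2)*h*s^2*E2*a2*i^2*h⁻¹*s⁻¹^2 + (1/2)*h^2*s^2*E3*a2*h⁻¹^2*s⁻¹^2 + (1/2)*h^2*s^2*E3*a2*i^2*h⁻¹^2*s⁻¹^2 + (1/2)*h^2*s^2*E2*a2*h⁻¹^2*s⁻¹^2 + (1/2)*h^2*s^2*E2*a2*i^2*h⁻¹^2*s⁻¹^2 + (-1/2)*β*s*E3*a2*s⁻¹ + (-1/2)*β*s*E2*a2*s⁻¹ + (-1/2)*β*h*s*E3*a2*h⁻¹*s⁻¹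 + (-1/2)*β*h*s*E2*a2*h⁻¹*s⁻¹ + (-1/2)*β*h*s^2*E3*a2*i^2*h⁻¹*s⁻¹^2 + (-1/2)*β*h*s^2*E2*a2*i^2*h⁻¹*s⁻¹^2 + (-1/2)*β*h^2*s^2*E3*a2*h⁻¹^2*s⁻¹^2 + (-1/2)*β*h^2*s^2*E3*a2*i^2*h⁻¹^2*s⁻¹^2 + (-1/2)*β*h^2*s^2*E2*a2*h⁻¹^2*s⁻¹^2 + (-1/2)*β*h^2*s^2*E2*a2*i^2*h⁻¹^2*s⁻¹^2 + (-1/2)*β*l^2*s*E3*a1*i*h⁻¹*s⁻¹^2 + (1/2)*β*l^2*s*E2*a1*i*h⁻¹*s⁻¹^2 + (1/2)*β^2*l^2*s*E3*a1*i*h⁻¹*s⁻¹^2 + (-1/2)*β^2*l^2*s*E2*a1*i*h⁻¹*s⁻¹^2 + (1/2)*α*η*l*s*E3*a3*i*h⁻¹*s⁻¹^2 + (-1/2)*α*η*l*s*E2*a3*i*h⁻¹*s⁻¹^2 + (-1/2)*α*β*η*l*s*E3*a3*i*h⁻¹*s⁻¹^2 + (1/2)*α*β*η*l*s*E2*a3*i*h⁻¹*s⁻¹^2)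 * hc1 + ((1/2)*E3*a2 + (1/2)*E2*a2 + (1/2)*h*s*E3*a2*i^2*h⁻¹*s⁻¹ + (1/2)*h*s*E2*a2*i^2*h⁻¹*s⁻¹ + (1/2)*h^2*s*E3*a2*h⁻¹^2*s⁻¹ + (1/2)*h^2*s*E2*a2*h⁻¹^2*s⁻¹ + (-1/2)*β*E3*a2 + (-1/2)*β*E2*a2 + (-1/2)*β*h*s*E3*a2*i^2*h⁻¹*s⁻¹ + (-1/2)*β*h*s*E2*a2*i^2*h⁻¹*s⁻¹ + (-1/2)*β*h^2*s*E3*a2*h⁻¹^2*s⁻¹ + (-1/2)*β*h^2*s*E2*a2*h⁻¹^2*s⁻¹ + (-1/2)*β*l^2*E3*a1*i*h⁻¹*s⁻¹ + (1/2)*β*l^2*E2*a1*i*h⁻¹*s⁻¹ + (1/2)*β*l^2*h*E3*a1*i*h⁻¹^2*s⁻¹ + (-1/2)*β*l^2*h*E2*a1*i*h⁻¹^2*s⁻¹ + (1/2)*β^2*l^2*E3*a1*i*h⁻¹*s⁻¹ + (-1/2)*β^2*l^2*E2*a1*i*h⁻¹*s⁻¹ + (-1/2)*β^2*l^2*h*E3*a1*i*h⁻¹^2*s⁻¹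 + (1/2)*β^2*l^2*h*E2*a1*i*h⁻¹^2*s⁻¹ + (1/2)*α*η*l*E3*a3*i*h⁻¹*s⁻¹ + (-1/2)*α*η*l*E2*a3*i*h⁻¹*s⁻¹ + (-1/2)*α*η*l*h*E3*a3*i*h⁻¹^2*s⁻¹ + (1/2)*α*η*l*h*E2*a3*i*h⁻¹^2*s⁻¹ + (-1/2)*α*β*η*l*E3*a3*i*h⁻¹*s⁻¹ + (1/2)*α*β*η*l*E2*a3*i*h⁻¹*s⁻¹ + (1/2)*α*β*η*l*h*E3*a3*i*h⁻¹^2*s⁻¹ + (-1/2)*α*β*η*l*h*E2*a3*i*h⁻¹^2*s⁻¹) * hc2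

lemma algrow2 (ν α β η l h s p E1 E2 E3 a1 a2 a3 i : ℂ)
    (hh : h ≠ 0) (hs : s ≠ 0) (hl : l ≠ 0)
    (hi : i^2 = -1) (hs2 : s^2 = p)
    (hH : h^2 = α^2*η^2 + β*(β-1)*l^2) :
    -(β*l^2/p) * ((α^2*η^2/h^2 * E1 + β*(β-1)*l^2/(2*h^2) * (E2+E3)) * a1
      + (i * ((β-1)*s/(2*h)) * (E3-E2)) * a2
      + (α*(β-1)*η*l/h^2 * E1 - α*(β-1)*η*l/(2*h^2) * (E2+E3)) * a3)
    + (-(ν*p)) * ((i * (β*l^2/(2*h*s)) * (E2-E3)) * a1 + (1/2 * (E2+E3)) * a2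
      + (i*(α*η*l/(2*h*s))*(E3-E2)) * a3)
    + (α*η*l/p) * ((α*β*η*l/h^2*E1 - α*β*η*l/(2*h^2)*(E2+E3)) * a1
      + (i*(α*η*s/(2*h*l))*(E2-E3)) * a2
      + (β*(β-1)*l^2/h^2*E1 + α^2*η^2/(2*h^2)*(E2+E3)) * a3)
    = (0 : ℂ) * (-(ν*p)*E1)
    + (i*(β*l^2/(2*h*s))*a1 + (1/2)*a2 - i*(α*η*l/(2*h*s))*a3) * ((-(ν*p)+i*(h/s))*E2)
    + (-(i*(β*l^2/(2*h*s)))*a1 + (1/2)*a2 + i*(α*η*l/(2*h*s))*a3) * ((-(ν*p)-i*(h/s))*E3) := by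
  have hc1 : h * h⁻¹ = 1 := mul_inv_cancel₀ hh
  have hc2 : s * s⁻¹ = 1 := mul_inv_cancel₀ hs
  have hc3 : l * l⁻¹ = 1 := mul_inv_cancel₀ hl
  subst hs2
  linear_combination ((1/2)*l*h*s*E3*a2*i*h⁻¹^2*s⁻¹^2*l⁻¹ + (-1/2)*l*h*s*E2*a2*i*h⁻¹^2*s⁻¹^2*l⁻¹ + (1/2)*β*l^3*E3*a1*h⁻¹^2*s⁻¹^2*l⁻¹ + (1/2)*β*l^3*E2*a1*h⁻¹^2*s⁻¹^2*l⁻¹ + (-1/2)*α*η*l^2*E3*a3*h⁻¹^2*s⁻¹^2*l⁻¹ + (-1/2)*α*η*l^2*E2*a3*h⁻¹^2*s⁻¹^2*l⁻¹) * hH + ((-1/2)*β*l^3*h^3*s^2*E3*a1*h⁻¹^3*s⁻¹^4*l⁻¹ + (-1/2)*β*l^3*h^3*s^2*E2*a1*h⁻¹^3*s⁻¹^4*l⁻¹ + (1/2)*α*η*l^2*h^3*s^2*E3*a3*h⁻¹^3*s⁻¹^4*l⁻¹ + (1/2)*α*η*l^2*h^3*s^2*E2*a3*h⁻¹^3*s⁻¹^4*l⁻¹)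 * hi + ((-1/2)*l*h*s^2*E3*a2*i*s⁻¹^3*l⁻¹ + (1/2)*l*h*s^2*E2*a2*i*s⁻¹^3*l⁻¹ + (-1/2)*l*h^2*s^2*E3*a2*i*h⁻¹*s⁻¹^3*l⁻¹ + (1/2)*l*h^2*s^2*E2*a2*i*h⁻¹*s⁻¹^3*l⁻¹ + (-1/2)*β*l^3*s^3*E3*a2*i*h⁻¹*s⁻¹^4*l⁻¹ + (1/2)*β*l^3*s^3*E2*a2*i*h⁻¹*s⁻¹^4*l⁻¹ + (1/2)*β*l^3*h*s^2*E3*a1*i^2*h⁻¹*s⁻¹^4*l⁻¹ + (1/2)*β*l^3*h*s^2*E2*a1*i^2*h⁻¹*s⁻¹^4*l⁻¹ + (1/2)*β*l^3*h^2*s^2*E3*a1*h⁻¹^2*s⁻¹^4*l⁻¹ + (1/2)*β*l^3*h^2*s^2*E3*a1*i^2*h⁻¹^2*s⁻¹^4*l⁻¹ + (1/2)*β*l^3*h^2*s^2*E2*a1*h⁻¹^2*s⁻¹^4*l⁻¹ + (1/2)*β*l^3*h^2*s^2*E2*a1*i^2*h⁻¹^2*s⁻¹^4*l⁻¹ + (1/2)*β^2*l^3*s^3*E3*a2*i*h⁻¹*s⁻¹^4*l⁻¹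 + (-1/2)*β^2*l^3*s^3*E2*a2*i*h⁻¹*s⁻¹^4*l⁻¹ + (-1/2)*α*η*l^2*h*s^2*E3*a3*i^2*h⁻¹*s⁻¹^4*l⁻¹ + (-1/2)*α*η*l^2*h*s^2*E2*a3*i^2*h⁻¹*s⁻¹^4*l⁻¹ + (-1/2)*α*η*l^2*h^2*s^2*E3*a3*h⁻¹^2*s⁻¹^4*l⁻¹ + (-1/2)*α*η*l^2*h^2*s^2*E3*a3*i^2*h⁻¹^2*s⁻¹^4*l⁻¹ + (-1/2)*α*η*l^2*h^2*s^2*E2*a3*h⁻¹^2*s⁻¹^4*l⁻¹ + (-1/2)*α*η*l^2*h^2*s^2*E2*a3*i^2*h⁻¹^2*s⁻¹^4*l⁻¹ + (1/2)*α^2*η^2*l^2*s^3*E3*a2*i*h⁻¹*s⁻¹^4*l⁻¹^2 + (-1/2)*α^2*η^2*l^2*s^3*E2*a2*i*h⁻¹*s⁻¹^4*l⁻¹^2) * hc1 + ((-1/2)*l*h*E3*a2*i*s⁻¹*l⁻¹ + (1/2)*l*h*E2*a2*i*s⁻¹*l⁻¹ + (-1/2)*l*h*s*E3*a2*i*s⁻¹^2*l⁻¹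 + (1/2)*l*h*s*E2*a2*i*s⁻¹^2*l⁻¹ + (1/2)*l*h^3*s*E3*a2*i*h⁻¹^2*s⁻¹^2*l⁻¹ + (-1/2)*l*h^3*s*E2*a2*i*h⁻¹^2*s⁻¹^2*l⁻¹ + (-1/2)*β*l^3*s*E3*a2*i*h⁻¹*s⁻¹^2*l⁻¹ + (1/2)*β*l^3*s*E2*a2*i*h⁻¹*s⁻¹^2*l⁻¹ + (-1/2)*β*l^3*s^2*E3*a2*i*h⁻¹*s⁻¹^3*l⁻¹ + (1/2)*β*l^3*s^2*E2*a2*i*h⁻¹*s⁻¹^3*l⁻¹ + (1/2)*β*l^3*h*E3*a1*i^2*h⁻¹*s⁻¹^2*l⁻¹ + (1/2)*β*l^3*h*E2*a1*i^2*h⁻¹*s⁻¹^2*l⁻¹ + (1/2)*β*l^3*h*s*E3*a2*i*h⁻¹^2*s⁻¹^2*l⁻¹ + (1/2)*β*l^3*h*s*E3*a1*i^2*h⁻¹*s⁻¹^3*l⁻¹ + (-1/2)*β*l^3*h*s*E2*a2*i*h⁻¹^2*s⁻¹^2*l⁻¹ + (1/2)*β*l^3*h*s*E2*a1*i^2*h⁻¹*s⁻¹^3*l⁻¹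 + (1/2)*β*l^3*h*s^2*E3*a2*i*h⁻¹^2*s⁻¹^3*l⁻¹ + (-1/2)*β*l^3*h*s^2*E2*a2*i*h⁻¹^2*s⁻¹^3*l⁻¹ + (1/2)*β*l^3*h^2*E3*a1*h⁻¹^2*s⁻¹^2*l⁻¹ + (1/2)*β*l^3*h^2*E2*a1*h⁻¹^2*s⁻¹^2*l⁻¹ + (1/2)*β*l^3*h^2*s*E3*a1*h⁻¹^2*s⁻¹^3*l⁻¹ + (1/2)*β*l^3*h^2*s*E2*a1*h⁻¹^2*s⁻¹^3*l⁻¹ + (1/2)*β^2*l^3*s*E3*a2*i*h⁻¹*s⁻¹^2*l⁻¹ + (-1/2)*β^2*l^3*s*E2*a2*i*h⁻¹*s⁻¹^2*l⁻¹ + (1/2)*β^2*l^3*s^2*E3*a2*i*h⁻¹*s⁻¹^3*l⁻¹ + (-1/2)*β^2*l^3*s^2*E2*a2*i*h⁻¹*s⁻¹^3*l⁻¹ + (-1/2)*β^2*l^3*h*s*E3*a2*i*h⁻¹^2*s⁻¹^2*l⁻¹ + (1/2)*β^2*l^3*h*s*E2*a2*i*h⁻¹^2*s⁻¹^2*l⁻¹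 + (-1/2)*β^2*l^3*h*s^2*E3*a2*i*h⁻¹^2*s⁻¹^3*l⁻¹ + (1/2)*β^2*l^3*h*s^2*E2*a2*i*h⁻¹^2*s⁻¹^3*l⁻¹ + (-1/2)*α*η*l^2*h*E3*a3*i^2*h⁻¹*s⁻¹^2*l⁻¹ + (-1/2)*α*η*l^2*h*E2*a3*i^2*h⁻¹*s⁻¹^2*l⁻¹ + (-1/2)*α*η*l^2*h*s*E3*a3*i^2*h⁻¹*s⁻¹^3*l⁻¹ + (-1/2)*α*η*l^2*h*s*E2*a3*i^2*h⁻¹*s⁻¹^3*l⁻¹ + (-1/2)*α*η*l^2*h^2*E3*a3*h⁻¹^2*s⁻¹^2*l⁻¹ + (-1/2)*α*η*l^2*h^2*E2*a3*h⁻¹^2*s⁻¹^2*l⁻¹ + (-1/2)*α*η*l^2*h^2*s*E3*a3*h⁻¹^2*s⁻¹^3*l⁻¹ + (-1/2)*α*η*l^2*h^2*s*E2*a3*h⁻¹^2*s⁻¹^3*l⁻¹ + (1/2)*α^2*η^2*l^2*s*E3*a2*i*h⁻¹*s⁻¹^2*l⁻¹^2 + (-1/2)*α^2*η^2*l^2*s*E2*a2*i*h⁻¹*s⁻¹^2*l⁻¹^2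 + (1/2)*α^2*η^2*l^2*s^2*E3*a2*i*h⁻¹*s⁻¹^3*l⁻¹^2 + (-1/2)*α^2*η^2*l^2*s^2*E2*a2*i*h⁻¹*s⁻¹^3*l⁻¹^2 + (-1/2)*α^2*η^2*l^2*h*s*E3*a2*i*h⁻¹^2*s⁻¹^2*l⁻¹^2 + (1/2)*α^2*η^2*l^2*h*s*E2*a2*i*h⁻¹^2*s⁻¹^2*l⁻¹^2 + (-1/2)*α^2*η^2*l^2*h*s^2*E3*a2*i*h⁻¹^2*s⁻¹^3*l⁻¹^2 + (1/2)*α^2*η^2*l^2*h*s^2*E2*a2*i*h⁻¹^2*s⁻¹^3*l⁻¹^2) * hc2 + ((-1/2)*h*E3*a2*i*s⁻¹ + (1/2)*h*E2*a2*i*s⁻¹ + (-1/2)*β*l^2*s*E3*a2*i*h⁻¹*s⁻¹^2 + (1/2)*β*l^2*s*E2*a2*i*h⁻¹*s⁻¹^2 + (1/2)*β*l^2*h*E3*a1*i^2*h⁻¹*s⁻¹^2 + (1/2)*β*l^2*h*E2*a1*i^2*h⁻¹*s⁻¹^2 + (1/2)*β^2*l^2*s*E3*a2*i*h⁻¹*s⁻¹^2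 + (-1/2)*β^2*l^2*s*E2*a2*i*h⁻¹*s⁻¹^2 + (-1/2)*β^2*l^4*E3*a1*h⁻¹^2*s⁻¹^2 + (-1/2)*β^2*l^4*E2*a1*h⁻¹^2*s⁻¹^2 + (1/2)*β^3*l^4*E3*a1*h⁻¹^2*s⁻¹^2 + (1/2)*β^3*l^4*E2*a1*h⁻¹^2*s⁻¹^2 + (-1/2)*α*η*l*h*E3*a3*i^2*h⁻¹*s⁻¹^2 + (-1/2)*α*η*l*h*E2*a3*i^2*h⁻¹*s⁻¹^2 + (1/2)*α*β*η*l^3*E3*a3*h⁻¹^2*s⁻¹^2 + (1/2)*α*β*η*l^3*E2*a3*h⁻¹^2*s⁻¹^2 + (-1/2)*α*β^2*η*l^3*E3*a3*h⁻¹^2*s⁻¹^2 + (-1/2)*α*β^2*η*l^3*E2*a3*h⁻¹^2*s⁻¹^2 + (1/2)*α^2*η^2*l*s*E3*a2*i*h⁻¹*s⁻¹^2*l⁻¹ + (-1/2)*α^2*η^2*l*s*E2*a2*i*h⁻¹*s⁻¹^2*l⁻¹ + (-1/2)*α^2*η^2*l*h*s*E3*a2*i*h⁻¹^2*s⁻¹^2*l⁻¹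 + (1/2)*α^2*η^2*l*h*s*E2*a2*i*h⁻¹^2*s⁻¹^2*l⁻¹ + (1/2)*α^2*β*η^2*l^2*E3*a1*h⁻¹^2*s⁻¹^2 + (1/2)*α^2*β*η^2*l^2*E2*a1*h⁻¹^2*s⁻¹^2 + (-1/2)*α^3*η^3*l*E3*a3*h⁻¹^2*s⁻¹^2 + (-1/2)*α^3*η^3*l*E2*a3*h⁻¹^2*s⁻¹^2) * hc3

lemma algrow3 (ν α β η l h s p E1 E2 E3 a1 a2 a3 i : ℂ)
    (hh : h ≠ 0) (hs : s ≠ 0) (hl : l ≠ 0)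
    (hi : i^2 = -1) (hs2 : s^2 = p)
    (hH : h^2 = α^2*η^2 + β*(β-1)*l^2) :
    (-(α*η/l)) * ((i * (β*l^2/(2*h*s)) * (E2-E3)) * a1 + (1/2 * (E2+E3)) * a2
      + (i*(α*η*l/(2*h*s))*(E3-E2)) * a3)
    + (-(ν*p)) * ((α*β*η*l/h^2*E1 - α*β*η*l/(2*h^2)*(E2+E3)) * a1
      + (i*(α*η*s/(2*h*l))*(E2-E3)) * a2
      + (β*(β-1)*l^2/h^2*E1 + α^2*η^2/(2*h^2)*(E2+E3)) * a3)
    = ((α*β*η*l/h^2)*a1 + (β*(β-1)*l^2/h^2)*a3) * (-(ν*p)*E1)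
    + (-(α*β*η*l/(2*h^2))*a1 + i*(α*η*s/(2*h*l))*a2 + (α^2*η^2/(2*h^2))*a3) * ((-(ν*p)+i*(h/s))*E2)
    + (-(α*β*η*l/(2*h^2))*a1 - i*(α*η*s/(2*h*l))*a2 + (α^2*η^2/(2*h^2))*a3) * ((-(ν*p)-i*(h/s))*E3) := by
  have hc1 : h * h⁻¹ = 1 := mul_inv_cancel₀ hh
  have hc2 : s * s⁻¹ = 1 := mul_inv_cancel₀ hs
  have hc3 : l * l⁻¹ = 1 := mul_inv_cancel₀ hl
  subst hs2
  linear_combination ((-1/2)*α*η*l*h^3*s^2*E3*a2*h⁻¹^3*s⁻¹^2*l⁻¹^2 + (-1/2)*α*η*l*h^3*s^2*E2*a2*h⁻¹^3*s⁻¹^2*l⁻¹^2) * hi + ((1/2)*α*η*l*s*E3*a2*s⁻¹*l⁻¹^2 + (1/2)*α*η*l*s*E2*a2*s⁻¹*l⁻¹^2 + (1/2)*α*η*l*h*s*E3*a2*h⁻¹*s⁻¹*l⁻¹^2 + (1/2)*α*η*l*h*s*E2*a2*h⁻¹*s⁻¹*l⁻¹^2 + (1/2)*α*η*l*h*s^2*E3*a2*i^2*h⁻¹*s⁻¹^2*l⁻¹^2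 + (1/2)*α*η*l*h*s^2*E2*a2*i^2*h⁻¹*s⁻¹^2*l⁻¹^2 + (1/2)*α*η*l*h^2*s^2*E3*a2*h⁻¹^2*s⁻¹^2*l⁻¹^2 + (1/2)*α*η*l*h^2*s^2*E3*a2*i^2*h⁻¹^2*s⁻¹^2*l⁻¹^2 + (1/2)*α*η*l*h^2*s^2*E2*a2*h⁻¹^2*s⁻¹^2*l⁻¹^2 + (1/2)*α*η*l*h^2*s^2*E2*a2*i^2*h⁻¹^2*s⁻¹^2*l⁻¹^2 + (-1/2)*α*β*η*l^3*s*E3*a1*i*h⁻¹*s⁻¹^2*l⁻¹^2 + (1/2)*α*β*η*l^3*s*E2*a1*i*h⁻¹*s⁻¹^2*l⁻¹^2 + (1/2)*α^2*η^2*l^2*s*E3*a3*i*h⁻¹*s⁻¹^2*l⁻¹^2 + (-1/2)*α^2*η^2*l^2*s*E2*a3*i*h⁻¹*s⁻¹^2*l⁻¹^2) * hc1 + ((1/2)*α*η*l*E3*a2*l⁻¹^2 + (1/2)*α*η*l*E2*a2*l⁻¹^2 + (1/2)*α*η*l*h*s*E3*a2*i^2*h⁻¹*s⁻¹*l⁻¹^2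 + (1/2)*α*η*l*h*s*E2*a2*i^2*h⁻¹*s⁻¹*l⁻¹^2 + (1/2)*α*η*l*h^2*s*E3*a2*h⁻¹^2*s⁻¹*l⁻¹^2 + (1/2)*α*η*l*h^2*s*E2*a2*h⁻¹^2*s⁻¹*l⁻¹^2 + (-1/2)*α*β*η*l^3*E3*a1*i*h⁻¹*s⁻¹*l⁻¹^2 + (1/2)*α*β*η*l^3*E2*a1*i*h⁻¹*s⁻¹*l⁻¹^2 + (1/2)*α*β*η*l^3*h*E3*a1*i*h⁻¹^2*s⁻¹*l⁻¹^2 + (-1/2)*α*β*η*l^3*h*E2*a1*i*h⁻¹^2*s⁻¹*l⁻¹^2 + (1/2)*α^2*η^2*l^2*E3*a3*i*h⁻¹*s⁻¹*l⁻¹^2 + (-1/2)*α^2*η^2*l^2*E2*a3*i*h⁻¹*s⁻¹*l⁻¹^2 + (-1/2)*α^2*η^2*l^2*h*E3*a3*i*h⁻¹^2*s⁻¹*l⁻¹^2 + (1/2)*α^2*η^2*l^2*h*E2*a3*i*h⁻¹^2*s⁻¹*l⁻¹^2) * hc2 + ((1/2)*α*η*E3*a2*l⁻¹ + (1/2)*α*η*E2*a2*l⁻¹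 + (1/2)*α*η*h*s*E3*a2*i^2*h⁻¹*s⁻¹*l⁻¹ + (1/2)*α*η*h*s*E2*a2*i^2*h⁻¹*s⁻¹*l⁻¹ + (1/2)*α*β*η*l*h*E3*a1*i*h⁻¹^2*s⁻¹ + (-1/2)*α*β*η*l*h*E2*a1*i*h⁻¹^2*s⁻¹ + (-1/2)*α*β*η*l^2*E3*a1*i*h⁻¹*s⁻¹*l⁻¹ + (1/2)*α*β*η*l^2*E2*a1*i*h⁻¹*s⁻¹*l⁻¹ + (1/2)*α*β*η*l^2*h*E3*a1*i*h⁻¹^2*s⁻¹*l⁻¹ + (-1/2)*α*β*η*l^2*h*E2*a1*i*h⁻¹^2*s⁻¹*l⁻¹ + (-1/2)*α^2*η^2*h*E3*a3*i*h⁻¹^2*s⁻¹ + (1/2)*α^2*η^2*h*E2*a3*i*h⁻¹^2*s⁻¹ + (1/2)*α^2*η^2*l*E3*a3*i*h⁻¹*s⁻¹*l⁻¹ + (-1/2)*α^2*η^2*l*E2*a3*i*h⁻¹*s⁻¹*l⁻¹ + (-1/2)*α^2*η^2*l*h*E3*a3*i*h⁻¹^2*s⁻¹*l⁻¹ + (1/2)*α^2*η^2*l*h*E2*a3*i*h⁻¹^2*s⁻¹*l⁻¹)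 * hc3


private lemma expo (c : ℂ) (t : ℝ) :
    HasDerivAt (fun u : ℝ => Complex.exp (c*u)) (c * Complex.exp (c*t)) t := by
  have h0 : HasDerivAt (fun z : ℂ => c * z) c (t:ℂ) := by
    simpa using (hasDerivAt_id (t:ℂ)).const_mul c
  have h1 : HasDerivAt (fun z : ℂ => Complex.exp (c*z)) (Complex.exp (c*(t:ℂ)) * c) (t:ℂ) :=
    (Complex.hasDerivAt_exp (c*(t:ℂ))).comp (t:ℂ) h0
  simpa [mul_comm] using h1.comp_ofReal

private lemma expComb (c1 c2 c3 l1 l2 l3 : ℂ) (t : ℝ) :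
    HasDerivAt
      (fun u : ℝ => c1 * Complex.exp (l1*u) + c2 * Complex.exp (l2*u) + c3 * Complex.exp (l3*u))
      (c1 * (l1 * Complex.exp (l1*(t:ℂ))) + c2 * (l2 * Complex.exp (l2*(t:ℂ)))
        + c3 * (l3 * Complex.exp (l3*(t:ℂ)))) t :=
  (((expo l1 t).const_mul c1).add ((expo l2 t).const_mul c2)).add ((expo l3 t).const_mul c3)

set_option maxHeartbeats 3200000 in
/-- The explicit formulas for the simple-zero modes of the linearized 3D rotating
Boussinesq system: the functions `x₁, x₂, x₃` defined below have initial data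
`(a₁, a₂, a₃)` and solve the ODE system `x′(t) = 𝒜·x(t)`. -/
theorem stmt_4 (ν α β : ℝ) (hν : 0 < ν) (hα : 0 < α) (hB : 0 < β * (β - 1))
    (η : ℝ) (l : ℤ) (hl : l ≠ 0)
    (p₀ h : ℝ)
    (hp₀ : p₀ = η ^ 2 + (l : ℝ) ^ 2)
    (hh : h = Real.sqrt (α ^ 2 * η ^ 2 + β * (β - 1) * (l : ℝ) ^ 2))
    (A : Matrix (Fin 3) (Fin 3) ℂ)
    (hA : A = !![((-(ν * p₀) : ℝ) : ℂ), ((β - 1 : ℝ) : ℂ), 0;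
                 ((-(β * (l : ℝ) ^ 2 / p₀) : ℝ) : ℂ), ((-(ν * p₀) : ℝ) : ℂ),
                   ((α * η * (l : ℝ) / p₀ : ℝ) : ℂ);
                 0, ((-(α * η / (l : ℝ)) : ℝ) : ℂ), ((-(ν * p₀) : ℝ) : ℂ)])
    (lam₁ lam₂ lam₃ : ℂ)
    (hlam₁ : lam₁ = ((-(ν * p₀) : ℝ) : ℂ))
    (hlam₂ : lam₂ = ((-(ν * p₀) : ℝ) : ℂ) + Complex.I * ((h / Real.sqrt p₀ : ℝ) : ℂ))
    (hlam₃ : lam₃ = ((-(ν * p₀) : ℝ) : ℂ) - Complex.I * ((h / Real.sqrt p₀ : ℝ) : ℂ))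
    (a₁ a₂ a₃ : ℂ) (x₁ x₂ x₃ : ℝ → ℂ)
    (hx₁ : ∀ t : ℝ, x₁ t =
      (((α ^ 2 * η ^ 2 / h ^ 2 : ℝ) : ℂ) * Complex.exp (lam₁ * (t : ℂ)) +
        ((β * (β - 1) * (l : ℝ) ^ 2 / (2 * h ^ 2) : ℝ) : ℂ) *
          (Complex.exp (lam₂ * (t : ℂ)) + Complex.exp (lam₃ * (t : ℂ)))) * a₁ +
      (Complex.I * (((β - 1) * Real.sqrt p₀ / (2 * h) : ℝ) : ℂ) *
          (Complex.exp (lam₃ * (t : ℂ)) - Complex.exp (lam₂ * (t : ℂ)))) * a₂ +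
      (((α * (β - 1) * η * (l : ℝ) / h ^ 2 : ℝ) : ℂ) * Complex.exp (lam₁ * (t : ℂ)) -
        ((α * (β - 1) * η * (l : ℝ) / (2 * h ^ 2) : ℝ) : ℂ) *
          (Complex.exp (lam₂ * (t : ℂ)) + Complex.exp (lam₃ * (t : ℂ)))) * a₃)
    (hx₂ : ∀ t : ℝ, x₂ t =
      (Complex.I * ((β * (l : ℝ) ^ 2 / (2 * h * Real.sqrt p₀) : ℝ) : ℂ) *
          (Complex.exp (lam₂ * (t : ℂ)) - Complex.exp (lam₃ * (t : ℂ)))) * a₁ +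
      ((1 / 2 : ℂ) * (Complex.exp (lam₂ * (t : ℂ)) + Complex.exp (lam₃ * (t : ℂ)))) * a₂ +
      (Complex.I * ((α * η * (l : ℝ) / (2 * h * Real.sqrt p₀) : ℝ) : ℂ) *
          (Complex.exp (lam₃ * (t : ℂ)) - Complex.exp (lam₂ * (t : ℂ)))) * a₃)
    (hx₃ : ∀ t : ℝ, x₃ t =
      (((α * β * η * (l : ℝ) / h ^ 2 : ℝ) : ℂ) * Complex.exp (lam₁ * (t : ℂ)) -
        ((α * β * η * (l : ℝ) / (2 * h ^ 2) : ℝ) : ℂ) *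
          (Complex.exp (lam₂ * (t : ℂ)) + Complex.exp (lam₃ * (t : ℂ)))) * a₁ +
      (Complex.I * ((α * η * Real.sqrt p₀ / (2 * h * (l : ℝ)) : ℝ) : ℂ) *
          (Complex.exp (lam₂ * (t : ℂ)) - Complex.exp (lam₃ * (t : ℂ)))) * a₂ +
      (((β * (β - 1) * (l : ℝ) ^ 2 / h ^ 2 : ℝ) : ℂ) * Complex.exp (lam₁ * (t : ℂ)) +
        ((α ^ 2 * η ^ 2 / (2 * h ^ 2) : ℝ) : ℂ) *
          (Complex.exp (lam₂ * (t : ℂ)) + Complex.exp (lam₃ * (t : ℂ)))) * a₃) :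
    (x₁ 0 = a₁ ∧ x₂ 0 = a₂ ∧ x₃ 0 = a₃) ∧
    ∀ t : ℝ,
      HasDerivAt x₁ (A.mulVec ![x₁ t, x₂ t, x₃ t] 0) t ∧
      HasDerivAt x₂ (A.mulVec ![x₁ t, x₂ t, x₃ t] 1) t ∧
      HasDerivAt x₃ (A.mulVec ![x₁ t, x₂ t, x₃ t] 2) t := by
  have hlR : (l:ℝ) ≠ 0 := Int.cast_ne_zero.mpr hl
  have hl2 : (0:ℝ) < (l:ℝ)^2 := by positivity
  have hp0pos : 0 < p₀ := by rw [hp₀]; nlinarith [sq_nonneg η]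
  have hXpos : (0:ℝ) < α ^ 2 * η ^ 2 + β * (β - 1) * (l : ℝ) ^ 2 := by
    have h1 : (0:ℝ) < β * (β - 1) * (l : ℝ) ^ 2 := mul_pos hB hl2
    nlinarith [sq_nonneg (α * η)]
  have hhpos : 0 < h := by rw [hh]; exact Real.sqrt_pos.mpr hXpos
  have hhsq : h ^ 2 = α ^ 2 * η ^ 2 + β * (β - 1) * (l : ℝ) ^ 2 := by
    rw [hh]; exact Real.sq_sqrt hXpos.le
  set s := Real.sqrt p₀ with hsdef
  have hspos : 0 < s := Real.sqrt_pos.mpr hp0pos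
  have hssq : s ^ 2 = p₀ := Real.sq_sqrt hp0pos.le
  have hhC : (h:ℂ) ≠ 0 := by exact_mod_cast hhpos.ne'
  have hsC : (s:ℂ) ≠ 0 := by exact_mod_cast hspos.ne'
  have hlC : ((l:ℤ):ℂ) ≠ 0 := by exact_mod_cast hl
  have hs2C : ((s:ℝ):ℂ)^2 = ((p₀:ℝ):ℂ) := by exact_mod_cast hssq
  have hHC : ((h:ℝ):ℂ)^2 = (α:ℂ)^2*(η:ℂ)^2 + (β:ℂ)*((β:ℂ)-1)*((l:ℤ):ℂ)^2 := by
    exact_mod_cast hhsq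
  have hc1 : (h:ℂ) * (h:ℂ)⁻¹ = 1 := mul_inv_cancel₀ hhC
  subst hlam₁ hlam₂ hlam₃
  constructor
  · refine ⟨?_, ?_, ?_⟩
    · rw [hx₁ 0]
      push_cast
      simp only [mul_zero, Complex.exp_zero]
      linear_combination (-a₁*((h:ℂ))⁻¹^2) * hHC + (a₁ + (h:ℂ)*a₁*(h:ℂ)⁻¹) * hc1
    · rw [hx₂ 0]
      push_cast
      simp only [mul_zero, Complex.exp_zero]
      ring
    · rw [hx₃ 0]
      push_cast
      simp only [mul_zero, Complex.exp_zero]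
      linear_combination (-a₃*((h:ℂ))⁻¹^2) * hHC + (a₃ + (h:ℂ)*a₃*(h:ℂ)⁻¹) * hc1
  · intro t
    have d1 : HasDerivAt x₁
        ((((α:ℂ)^2*(η:ℂ)^2/(h:ℂ)^2)*a₁ + ((α:ℂ)*((β:ℂ)-1)*(η:ℂ)*((l:ℤ):ℂ)/(h:ℂ)^2)*a₃) *
            ((-((ν:ℂ)*(p₀:ℂ))) * Complex.exp ((-((ν:ℂ)*(p₀:ℂ)))*(t:ℂ))) +
          (((β:ℂ)*((β:ℂ)-1)*((l:ℤ):ℂ)^2/(2*(h:ℂ)^2))*a₁ - Complex.I*(((β:ℂ)-1)*(s:ℂ)/(2*(h:ℂ)))*a₂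
              - ((α:ℂ)*((β:ℂ)-1)*(η:ℂ)*((l:ℤ):ℂ)/(2*(h:ℂ)^2))*a₃) *
            ((-((ν:ℂ)*(p₀:ℂ)) + Complex.I*((h:ℂ)/(s:ℂ))) *
              Complex.exp ((-((ν:ℂ)*(p₀:ℂ)) + Complex.I*((h:ℂ)/(s:ℂ)))*(t:ℂ))) +
          (((β:ℂ)*((β:ℂ)-1)*((l:ℤ):ℂ)^2/(2*(h:ℂ)^2))*a₁ + Complex.I*(((β:ℂ)-1)*(s:ℂ)/(2*(h:ℂ)))*a₂
              - ((α:ℂ)*((β:ℂ)-1)*(η:ℂ)*((l:ℤ):ℂ)/(2*(h:ℂ)^2))*a₃) *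
            ((-((ν:ℂ)*(p₀:ℂ)) - Complex.I*((h:ℂ)/(s:ℂ))) *
              Complex.exp ((-((ν:ℂ)*(p₀:ℂ)) - Complex.I*((h:ℂ)/(s:ℂ)))*(t:ℂ)))) t := by
      have hfun : x₁ = fun u : ℝ =>
          (((α:ℂ)^2*(η:ℂ)^2/(h:ℂ)^2)*a₁ + ((α:ℂ)*((β:ℂ)-1)*(η:ℂ)*((l:ℤ):ℂ)/(h:ℂ)^2)*a₃) *
            Complex.exp ((-((ν:ℂ)*(p₀:ℂ)))*(u:ℂ)) +
          (((β:ℂ)*((β:ℂ)-1)*((l:ℤ):ℂ)^2/(2*(h:ℂ)^2))*a₁ - Complex.I*(((β:ℂ)-1)*(s:ℂ)/(2*(h:ℂ)))*a₂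
              - ((α:ℂ)*((β:ℂ)-1)*(η:ℂ)*((l:ℤ):ℂ)/(2*(h:ℂ)^2))*a₃) *
            Complex.exp ((-((ν:ℂ)*(p₀:ℂ)) + Complex.I*((h:ℂ)/(s:ℂ)))*(u:ℂ)) +
          (((β:ℂ)*((β:ℂ)-1)*((l:ℤ):ℂ)^2/(2*(h:ℂ)^2))*a₁ + Complex.I*(((β:ℂ)-1)*(s:ℂ)/(2*(h:ℂ)))*a₂
              - ((α:ℂ)*((β:ℂ)-1)*(η:ℂ)*((l:ℤ):ℂ)/(2*(h:ℂ)^2))*a₃) *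
            Complex.exp ((-((ν:ℂ)*(p₀:ℂ)) - Complex.I*((h:ℂ)/(s:ℂ)))*(u:ℂ)) := by
        funext u
        rw [hx₁ u]
        push_cast
        ring_nf
      rw [hfun]
      exact expComb _ _ _ _ _ _ t
    have d2 : HasDerivAt x₂
        ((0:ℂ) * ((-((ν:ℂ)*(p₀:ℂ))) * Complex.exp ((-((ν:ℂ)*(p₀:ℂ)))*(t:ℂ))) +
          (Complex.I*((β:ℂ)*((l:ℤ):ℂ)^2/(2*(h:ℂ)*(s:ℂ)))*a₁ + (1/2:ℂ)*a₂
              - Complex.I*((α:ℂ)*(η:ℂ)*((l:ℤ):ℂ)/(2*(h:ℂ)*(s:ℂ)))*a₃) *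
            ((-((ν:ℂ)*(p₀:ℂ)) + Complex.I*((h:ℂ)/(s:ℂ))) *
              Complex.exp ((-((ν:ℂ)*(p₀:ℂ)) + Complex.I*((h:ℂ)/(s:ℂ)))*(t:ℂ))) +
          (-(Complex.I*((β:ℂ)*((l:ℤ):ℂ)^2/(2*(h:ℂ)*(s:ℂ))))*a₁ + (1/2:ℂ)*a₂
              + Complex.I*((α:ℂ)*(η:ℂ)*((l:ℤ):ℂ)/(2*(h:ℂ)*(s:ℂ)))*a₃) *
            ((-((ν:ℂ)*(p₀:ℂ)) - Complex.I*((h:ℂ)/(s:ℂ))) *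
              Complex.exp ((-((ν:ℂ)*(p₀:ℂ)) - Complex.I*((h:ℂ)/(s:ℂ)))*(t:ℂ)))) t := by
      have hfun : x₂ = fun u : ℝ =>
          (0:ℂ) * Complex.exp ((-((ν:ℂ)*(p₀:ℂ)))*(u:ℂ)) +
          (Complex.I*((β:ℂ)*((l:ℤ):ℂ)^2/(2*(h:ℂ)*(s:ℂ)))*a₁ + (1/2:ℂ)*a₂
              - Complex.I*((α:ℂ)*(η:ℂ)*((l:ℤ):ℂ)/(2*(h:ℂ)*(s:ℂ)))*a₃) *
            Complex.exp ((-((ν:ℂ)*(p₀:ℂ)) + Complex.I*((h:ℂ)/(s:ℂ)))*(u:ℂ)) +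
          (-(Complex.I*((β:ℂ)*((l:ℤ):ℂ)^2/(2*(h:ℂ)*(s:ℂ))))*a₁ + (1/2:ℂ)*a₂
              + Complex.I*((α:ℂ)*(η:ℂ)*((l:ℤ):ℂ)/(2*(h:ℂ)*(s:ℂ)))*a₃) *
            Complex.exp ((-((ν:ℂ)*(p₀:ℂ)) - Complex.I*((h:ℂ)/(s:ℂ)))*(u:ℂ)) := by
        funext u
        rw [hx₂ u]
        push_cast
        ring_nf
      rw [hfun]
      exact expComb _ _ _ _ _ _ t
    have d3 : HasDerivAt x₃
        ((((α:ℂ)*(β:ℂ)*(η:ℂ)*((l:ℤ):ℂ)/(h:ℂ)^2)*a₁ + ((β:ℂ)*((β:ℂ)-1)*((l:ℤ):ℂ)^2/(h:ℂ)^2)*a₃) *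
            ((-((ν:ℂ)*(p₀:ℂ))) * Complex.exp ((-((ν:ℂ)*(p₀:ℂ)))*(t:ℂ))) +
          (-((α:ℂ)*(β:ℂ)*(η:ℂ)*((l:ℤ):ℂ)/(2*(h:ℂ)^2))*a₁
              + Complex.I*((α:ℂ)*(η:ℂ)*(s:ℂ)/(2*(h:ℂ)*((l:ℤ):ℂ)))*a₂
              + ((α:ℂ)^2*(η:ℂ)^2/(2*(h:ℂ)^2))*a₃) *
            ((-((ν:ℂ)*(p₀:ℂ)) + Complex.I*((h:ℂ)/(s:ℂ))) *
              Complex.exp ((-((ν:ℂ)*(p₀:ℂ)) + Complex.I*((h:ℂ)/(s:ℂ)))*(t:ℂ))) +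
          (-((α:ℂ)*(β:ℂ)*(η:ℂ)*((l:ℤ):ℂ)/(2*(h:ℂ)^2))*a₁
              - Complex.I*((α:ℂ)*(η:ℂ)*(s:ℂ)/(2*(h:ℂ)*((l:ℤ):ℂ)))*a₂
              + ((α:ℂ)^2*(η:ℂ)^2/(2*(h:ℂ)^2))*a₃) *
            ((-((ν:ℂ)*(p₀:ℂ)) - Complex.I*((h:ℂ)/(s:ℂ))) *
              Complex.exp ((-((ν:ℂ)*(p₀:ℂ)) - Complex.I*((h:ℂ)/(s:ℂ)))*(t:ℂ)))) t := by
      have hfun : x₃ = fun u : ℝ =>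
          (((α:ℂ)*(β:ℂ)*(η:ℂ)*((l:ℤ):ℂ)/(h:ℂ)^2)*a₁ + ((β:ℂ)*((β:ℂ)-1)*((l:ℤ):ℂ)^2/(h:ℂ)^2)*a₃) *
            Complex.exp ((-((ν:ℂ)*(p₀:ℂ)))*(u:ℂ)) +
          (-((α:ℂ)*(β:ℂ)*(η:ℂ)*((l:ℤ):ℂ)/(2*(h:ℂ)^2))*a₁
              + Complex.I*((α:ℂ)*(η:ℂ)*(s:ℂ)/(2*(h:ℂ)*((l:ℤ):ℂ)))*a₂
              + ((α:ℂ)^2*(η:ℂ)^2/(2*(h:ℂ)^2))*a₃) *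
            Complex.exp ((-((ν:ℂ)*(p₀:ℂ)) + Complex.I*((h:ℂ)/(s:ℂ)))*(u:ℂ)) +
          (-((α:ℂ)*(β:ℂ)*(η:ℂ)*((l:ℤ):ℂ)/(2*(h:ℂ)^2))*a₁
              - Complex.I*((α:ℂ)*(η:ℂ)*(s:ℂ)/(2*(h:ℂ)*((l:ℤ):ℂ)))*a₂
              + ((α:ℂ)^2*(η:ℂ)^2/(2*(h:ℂ)^2))*a₃) *
            Complex.exp ((-((ν:ℂ)*(p₀:ℂ)) - Complex.I*((h:ℂ)/(s:ℂ)))*(u:ℂ)) := by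
        funext u
        rw [hx₃ u]
        push_cast
        ring_nf
      rw [hfun]
      exact expComb _ _ _ _ _ _ t
    refine ⟨d1.congr_deriv ?_, d2.congr_deriv ?_, d3.congr_deriv ?_⟩
    · rw [hA]
      simp only [Matrix.mulVec, dotProduct, Fin.sum_univ_three, Matrix.cons_val',
        Matrix.cons_val_zero, Matrix.cons_val_one, Matrix.head_cons, Matrix.empty_val',
        Matrix.cons_val_fin_one, Matrix.head_fin_const, Matrix.of_apply, Matrix.cons_val_two,
        Matrix.tail_cons]
      rw [hx₁ t, hx₂ t, hx₃ t]
      push_cast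
      linear_combination (-1 : ℂ) * (algrow1 (ν:ℂ) (α:ℂ) (β:ℂ) (η:ℂ) ((l:ℤ):ℂ) (h:ℂ) (s:ℂ) ((p₀:ℝ):ℂ)
        (Complex.exp ((-((ν:ℂ)*(p₀:ℂ)))*(t:ℂ)))
        (Complex.exp ((-((ν:ℂ)*(p₀:ℂ)) + Complex.I*((h:ℂ)/(s:ℂ)))*(t:ℂ)))
        (Complex.exp ((-((ν:ℂ)*(p₀:ℂ)) - Complex.I*((h:ℂ)/(s:ℂ)))*(t:ℂ)))
        a₁ a₂ a₃ Complex.I hhC hsC hlC Complex.I_sq hs2C hHC)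
    · rw [hA]
      simp only [Matrix.mulVec, dotProduct, Fin.sum_univ_three, Matrix.cons_val',
        Matrix.cons_val_zero, Matrix.cons_val_one, Matrix.head_cons, Matrix.empty_val',
        Matrix.cons_val_fin_one, Matrix.head_fin_const, Matrix.of_apply, Matrix.cons_val_two,
        Matrix.tail_cons]
      rw [hx₁ t, hx₂ t, hx₃ t]
      push_cast
      linear_combination (-1 : ℂ) * (algrow2 (ν:ℂ) (α:ℂ) (β:ℂ) (η:ℂ) ((l:ℤ):ℂ) (h:ℂ) (s:ℂ) ((p₀:ℝ):ℂ)
        (Complex.exp ((-((ν:ℂ)*(p₀:ℂ)))*(t:ℂ)))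
        (Complex.exp ((-((ν:ℂ)*(p₀:ℂ)) + Complex.I*((h:ℂ)/(s:ℂ)))*(t:ℂ)))
        (Complex.exp ((-((ν:ℂ)*(p₀:ℂ)) - Complex.I*((h:ℂ)/(s:ℂ)))*(t:ℂ)))
        a₁ a₂ a₃ Complex.I hhC hsC hlC Complex.I_sq hs2C hHC)
    · rw [hA]
      simp only [Matrix.mulVec, dotProduct, Fin.sum_univ_three, Matrix.cons_val',
        Matrix.cons_val_zero, Matrix.cons_val_one, Matrix.head_cons, Matrix.empty_val',
        Matrix.cons_val_fin_one, Matrix.head_fin_const, Matrix.of_apply, Matrix.cons_val_two,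
        Matrix.tail_cons]
      rw [hx₁ t, hx₂ t, hx₃ t]
      push_cast
      linear_combination (-1 : ℂ) * (algrow3 (ν:ℂ) (α:ℂ) (β:ℂ) (η:ℂ) ((l:ℤ):ℂ) (h:ℂ) (s:ℂ) ((p₀:ℝ):ℂ)
        (Complex.exp ((-((ν:ℂ)*(p₀:ℂ)))*(t:ℂ)))
        (Complex.exp ((-((ν:ℂ)*(p₀:ℂ)) + Complex.I*((h:ℂ)/(s:ℂ)))*(t:ℂ)))
        (Complex.exp ((-((ν:ℂ)*(p₀:ℂ)) - Complex.I*((h:ℂ)/(s:ℂ)))*(t:ℂ)))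
        a₁ a₂ a₃ Complex.I hhC hsC hlC Complex.I_sq hs2C hHC)
end

section
/- The function Φ is twice differentiable on ℝ and for every ξ ∈ ℝ its second derivative is given by Φ″(ξ) = (B − α²) · (−3α²ξ⁴ − 2Bξ² + B) / ((1+ξ²)^{5/2}·(B+α²ξ²)^{3/2}). -/
/-!
With `a = α²`, `u = 1 + ξ²` and `v = B + a ξ²` (both positive) we have `ψ = v^{1/2} u^{-1/2}`.
Since `v' u - v u' = 2(a - B)ξ`, the product rule gives `ψ' = (a - B) ξ u^{-3/2} v^{-1/2}`;
differentiating once more and factoring out `u^{-5/2} v^{-3/2}` leaves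
`(a - B)(u v - 3ξ² v - a ξ² u) = (a - B)(B - 2Bξ² - 3aξ⁴)`.
-/

open Real

noncomputable def boussinesqPhase (a B c ξ : ℝ) : ℝ := c * ξ - √((B + a * ξ ^ 2) / (1 + ξ ^ 2))

lemma rpow_eq_rpow_sub_one_mul {x : ℝ} (hx : x ≠ 0) (p : ℝ) : x ^ p = x ^ (p - 1) * x := by
  rw [← rpow_add_one hx, sub_add_cancel]

lemma hasDerivAt_add_mul_sq_rpow {a b x : ℝ} (p : ℝ) (h : b + a * x ^ 2 ≠ 0) :
    HasDerivAt (fun x => (b + a * x ^ 2) ^ p) (2 * a * x * p * (b + a * x ^ 2) ^ (p - 1)) x :=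
  ((((hasDerivAt_pow 2 x).const_mul a).const_add b).congr_deriv (by ring)).rpow_const (Or.inl h)

lemma add_mul_sq_pos {a B : ℝ} (ha : 0 ≤ a) (hB : 0 < B) (ξ : ℝ) : 0 < B + a * ξ ^ 2 := by
  positivity

lemma boussinesqPhase_eq_rpow {a B : ℝ} (ha : 0 ≤ a) (hB : 0 < B) (c : ℝ) :
    boussinesqPhase a B c =
      fun ξ => c * ξ - (B + a * ξ ^ 2) ^ (1 / 2 : ℝ) * (1 + ξ ^ 2) ^ (-(1 / 2) : ℝ) := by
  funext ξ
  rw [boussinesqPhase, sqrt_eq_rpow, div_rpow (add_mul_sq_pos ha hB ξ).le (by positivity),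
    rpow_neg (by positivity), div_eq_mul_inv]

lemma hasDerivAt_boussinesqPhase {a B : ℝ} (ha : 0 ≤ a) (hB : 0 < B) (c ξ : ℝ) :
    HasDerivAt (boussinesqPhase a B c)
      (c - (a - B) * ξ * (1 + ξ ^ 2) ^ (-(3 / 2) : ℝ) * (B + a * ξ ^ 2) ^ (-(1 / 2) : ℝ)) ξ := by
  have hu : 1 + ξ ^ 2 ≠ 0 := by positivity
  have hv := (add_mul_sq_pos ha hB ξ).ne'
  have h := ((hasDerivAt_id' ξ).const_mul c).fun_sub
    ((hasDerivAt_add_mul_sq_rpow (1 / 2) hv).fun_mul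
      (hasDerivAt_add_mul_sq_rpow (a := 1) (b := 1) (-(1 / 2)) (by positivity)))
  simp only [one_mul] at h
  rw [boussinesqPhase_eq_rpow ha hB]
  refine h.congr_deriv ?_
  rw [rpow_eq_rpow_sub_one_mul hv (1 / 2), rpow_eq_rpow_sub_one_mul hu (-(1 / 2)),
    show (1 / 2 : ℝ) - 1 = -(1 / 2) by norm_num, show -(1 / 2 : ℝ) - 1 = -(3 / 2) by norm_num]
  ring

lemma deriv_boussinesqPhase {a B : ℝ} (ha : 0 ≤ a) (hB : 0 < B) (c : ℝ) :
    deriv (boussinesqPhase a B c) = fun ξ =>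
      c - (a - B) * ξ * (1 + ξ ^ 2) ^ (-(3 / 2) : ℝ) * (B + a * ξ ^ 2) ^ (-(1 / 2) : ℝ) :=
  funext fun ξ => (hasDerivAt_boussinesqPhase ha hB c ξ).deriv

lemma hasDerivAt_deriv_boussinesqPhase {a B : ℝ} (ha : 0 ≤ a) (hB : 0 < B) (c ξ : ℝ) :
    HasDerivAt (deriv (boussinesqPhase a B c))
      ((B - a) * (-3 * a * ξ ^ 4 - 2 * B * ξ ^ 2 + B) /
        ((1 + ξ ^ 2) ^ (5 / 2 : ℝ) * (B + a * ξ ^ 2) ^ (3 / 2 : ℝ))) ξ := by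
  have hu : 0 < 1 + ξ ^ 2 := by positivity
  have hv := add_mul_sq_pos ha hB ξ
  have h := ((((hasDerivAt_id' ξ).const_mul (a - B)).fun_mul
    (hasDerivAt_add_mul_sq_rpow (a := 1) (b := 1) (-(3 / 2)) (by positivity))).fun_mul
    (hasDerivAt_add_mul_sq_rpow (-(1 / 2)) hv.ne')).const_sub c
  simp only [one_mul] at h
  rw [deriv_boussinesqPhase ha hB]
  refine h.congr_deriv ?_
  rw [rpow_eq_rpow_sub_one_mul hv.ne' (-(1 / 2)), rpow_eq_rpow_sub_one_mul hu.ne' (-(3 / 2)),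
    show -(3 / 2 : ℝ) - 1 = -(5 / 2) by norm_num, show -(1 / 2 : ℝ) - 1 = -(3 / 2) by norm_num,
    rpow_neg hu.le, rpow_neg hv.le]
  field_simp
  ring

theorem stmt_5_general (α β c : ℝ) (hB : 0 < β * (β - 1))
    (Φ : ℝ → ℝ)
    (hΦ : ∀ ξ : ℝ, Φ ξ = c * ξ - Real.sqrt ((β * (β - 1) + α ^ 2 * ξ ^ 2) / (1 + ξ ^ 2))) :
    Differentiable ℝ Φ ∧ Differentiable ℝ (deriv Φ) ∧
    ∀ ξ : ℝ, deriv (deriv Φ) ξ =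
      (β * (β - 1) - α ^ 2) *
        (-3 * α ^ 2 * ξ ^ 4 - 2 * (β * (β - 1)) * ξ ^ 2 + β * (β - 1)) /
        ((1 + ξ ^ 2) ^ ((5 : ℝ) / 2) * (β * (β - 1) + α ^ 2 * ξ ^ 2) ^ ((3 : ℝ) / 2)) := by
  obtain rfl : Φ = boussinesqPhase (α ^ 2) (β * (β - 1)) c := funext hΦ
  have ha := sq_nonneg α
  exact ⟨fun ξ => (hasDerivAt_boussinesqPhase ha hB c ξ).differentiableAt,
    fun ξ => (hasDerivAt_deriv_boussinesqPhase ha hB c ξ).differentiableAt,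
    fun ξ => (hasDerivAt_deriv_boussinesqPhase ha hB c ξ).deriv⟩

/-- The phase function `Φ(ξ) = c·ξ − √((B + α²ξ²)/(1 + ξ²))`, with `B = β(β−1) > 0`,
is twice differentiable and its second derivative is
`Φ″(ξ) = (B − α²)(−3α²ξ⁴ − 2Bξ² + B)/((1+ξ²)^{5/2}(B+α²ξ²)^{3/2})`. -/
theorem stmt_5 (α β c : ℝ) (hα : 0 < α) (hB : 0 < β * (β - 1))
    (Φ : ℝ → ℝ)
    (hΦ : ∀ ξ : ℝ, Φ ξ = c * ξ - Real.sqrt ((β * (β - 1) + α ^ 2 * ξ ^ 2) / (1 + ξ ^ 2))) :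
    Differentiable ℝ Φ ∧ Differentiable ℝ (deriv Φ) ∧
    ∀ ξ : ℝ, deriv (deriv Φ) ξ =
      (β * (β - 1) - α ^ 2) *
        (-3 * α ^ 2 * ξ ^ 4 - 2 * (β * (β - 1)) * ξ ^ 2 + β * (β - 1)) /
        ((1 + ξ ^ 2) ^ ((5 : ℝ) / 2) * (β * (β - 1) + α ^ 2 * ξ ^ 2) ^ ((3 : ℝ) / 2)) :=
  stmt_5_general α β c hB Φ hΦ
end

section
/- There exist universal constants c > 0 and C > 0 such that for every ν ∈ (0,1), every t ≥ 0, every nonzero integer k, every η ∈ ℝ and every integer l, the multiplier m satisfies c·ν^{1/6} ≤ m(t,k,η,l) ≤ C·ν^{−1/6}. -/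
open Classical in
/-- The Fourier multiplier `m(t, k, η, l)` of Bedrossian–Germain–Masmoudi type used in
the paper, defined piecewise according to the position of `t` relative to the critical
times `η/k ± 1000ν^{−1/3}`; `p(t) = k² + (η − kt)² + l²`. -/
noncomputable def mMult (ν t : ℝ) (k : ℤ) (η : ℝ) (l : ℤ) : ℝ :=
  if k = 0 ∨ η / (k : ℝ) < -1000 * ν ^ (-(1 : ℝ) / 3) then 1
  else if η / (k : ℝ) ≤ 0 then
    (if t ≤ η / (k : ℝ) + 1000 * ν ^ (-(1 : ℝ) / 3) then
      (((k : ℝ) ^ 2 + η ^ 2 + (l : ℝ) ^ 2) /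
        ((k : ℝ) ^ 2 + (η - k * t) ^ 2 + (l : ℝ) ^ 2)) ^ ((1 : ℝ) / 4)
    else
      (((k : ℝ) ^ 2 + η ^ 2 + (l : ℝ) ^ 2) /
        ((k : ℝ) ^ 2 + (1000 * ν ^ (-(1 : ℝ) / 3) * k) ^ 2 + (l : ℝ) ^ 2)) ^ ((1 : ℝ) / 4))
  else if η / (k : ℝ) < 1000 * ν ^ (-(1 : ℝ) / 3) then
    (if t ≤ η / (k : ℝ) then
      ((((k : ℝ) ^ 2 + (η - k * t) ^ 2 + (l : ℝ) ^ 2)) /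
        ((k : ℝ) ^ 2 + (l : ℝ) ^ 2)) ^ ((1 : ℝ) / 4)
    else if t ≤ η / (k : ℝ) + 1000 * ν ^ (-(1 : ℝ) / 3) then
      (((k : ℝ) ^ 2 + (l : ℝ) ^ 2) /
        ((k : ℝ) ^ 2 + (η - k * t) ^ 2 + (l : ℝ) ^ 2)) ^ ((1 : ℝ) / 4)
    else
      (((k : ℝ) ^ 2 + (l : ℝ) ^ 2) /
        ((k : ℝ) ^ 2 + (1000 * ν ^ (-(1 : ℝ) / 3) * k) ^ 2 + (l : ℝ) ^ 2)) ^ ((1 : ℝ) / 4))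
  else
    (if t ≤ η / (k : ℝ) - 1000 * ν ^ (-(1 : ℝ) / 3) then
      (((k : ℝ) ^ 2 + (1000 * ν ^ (-(1 : ℝ) / 3) * k) ^ 2 + (l : ℝ) ^ 2) /
        ((k : ℝ) ^ 2 + (l : ℝ) ^ 2)) ^ ((1 : ℝ) / 4)
    else if t ≤ η / (k : ℝ) then
      ((((k : ℝ) ^ 2 + (η - k * t) ^ 2 + (l : ℝ) ^ 2)) /
        ((k : ℝ) ^ 2 + (l : ℝ) ^ 2)) ^ ((1 : ℝ) / 4)
    else if t ≤ η / (k : ℝ) + 1000 * ν ^ (-(1 : ℝ) / 3) then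
      (((k : ℝ) ^ 2 + (l : ℝ) ^ 2) /
        ((k : ℝ) ^ 2 + (η - k * t) ^ 2 + (l : ℝ) ^ 2)) ^ ((1 : ℝ) / 4)
    else
      (((k : ℝ) ^ 2 + (l : ℝ) ^ 2) /
        ((k : ℝ) ^ 2 + (1000 * ν ^ (-(1 : ℝ) / 3) * k) ^ 2 + (l : ℝ) ^ 2)) ^ ((1 : ℝ) / 4))


lemma auxPow (ν : ℝ) (hν0 : 0 < ν) (hν1 : ν < 1) (K L s s' : ℝ)
    (hK : 1 ≤ K) (hL : 0 ≤ L) (hs : 0 ≤ s) (hs' : 0 ≤ s')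
    (hsA : s ≤ (1000 * ν ^ (-(1:ℝ)/3))^2 * K)
    (hs'A : s' ≤ (1000 * ν ^ (-(1:ℝ)/3))^2 * K) :
    (((10:ℝ)^7) ^ ((1:ℝ)/4))⁻¹ * ν^((1:ℝ)/6) ≤ ((K+s+L)/(K+s'+L)) ^ ((1:ℝ)/4) ∧
    ((K+s+L)/(K+s'+L)) ^ ((1:ℝ)/4) ≤ ((10:ℝ)^7) ^ ((1:ℝ)/4) * ν^(-(1:ℝ)/6) := by
  set A : ℝ := ν ^ (-(1:ℝ)/3) with hA
  have hA0 : 0 < A := Real.rpow_pos_of_pos hν0 _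
  have hA1 : 1 ≤ A := Real.one_le_rpow_of_pos_of_le_one_of_nonpos hν0 hν1.le (by norm_num)
  have hD : 0 < K + s' + L := by linarith
  have hN : 0 < K + s + L := by linarith
  have hA2 : A^2 = ν ^ (-(2:ℝ)/3) := by
    rw [hA, ← Real.rpow_natCast (ν ^ (-(1:ℝ)/3)) 2, ← Real.rpow_mul hν0.le]
    norm_num
  have hM : (ν ^ (-(2:ℝ)/3)) ^ ((1:ℝ)/4) = ν ^ (-(1:ℝ)/6) := by
    rw [← Real.rpow_mul hν0.le]; norm_num
  have hA2' : 1 ≤ A^2 := by nlinarith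
  have hAK : K ≤ A^2 * K := le_mul_of_one_le_left (by linarith) hA2'
  have hAL : L ≤ A^2 * L := le_mul_of_one_le_left hL hA2'
  have hub : (K+s+L)/(K+s'+L) ≤ 10^7 * A^2 := by
    rw [div_le_iff₀ hD]
    nlinarith [mul_nonneg (sq_nonneg A) hs']
  have hlb : (10^7 * A^2)⁻¹ ≤ (K+s+L)/(K+s'+L) := by
    have h1 : (K+s'+L) ≤ 10^7 * A^2 * (K+s+L) := by
      nlinarith [mul_nonneg (sq_nonneg A) hs]
    have hP : (0:ℝ) < 10^7 * A^2 := by positivity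
    rw [le_div_iff₀ hD, inv_mul_le_iff₀ hP]
    linarith
  constructor
  · have h2 : ((10^7 * A^2)⁻¹ : ℝ) ^ ((1:ℝ)/4) ≤ ((K+s+L)/(K+s'+L)) ^ ((1:ℝ)/4) :=
      Real.rpow_le_rpow (by positivity) hlb (by norm_num)
    calc (((10:ℝ)^7) ^ ((1:ℝ)/4))⁻¹ * ν^((1:ℝ)/6)
        = ((10^7 * A^2)⁻¹ : ℝ) ^ ((1:ℝ)/4) := by
          rw [Real.inv_rpow (by positivity), Real.mul_rpow (by positivity) (sq_nonneg A),
            hA2, hM, mul_inv, ← Real.rpow_neg hν0.le]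
          norm_num
      _ ≤ _ := h2
  · calc ((K+s+L)/(K+s'+L)) ^ ((1:ℝ)/4)
        ≤ ((10:ℝ)^7 * A^2) ^ ((1:ℝ)/4) :=
          Real.rpow_le_rpow (by positivity) hub (by norm_num)
      _ = ((10:ℝ)^7) ^ ((1:ℝ)/4) * ν^(-(1:ℝ)/6) := by
          rw [Real.mul_rpow (by positivity) (sq_nonneg A), hA2, hM]

lemma sqb (x a k : ℝ) (h1 : -a ≤ x) (h2 : x ≤ a) : (x*k)^2 ≤ a^2 * k^2 := by
  rw [mul_pow]; exact mul_le_mul_of_nonneg_right (sq_le_sq' h1 h2) (sq_nonneg k)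

set_option maxHeartbeats 2000000 in
/-- Two-sided bound (4.11-1): there are universal constants `c, C > 0` with
`c·ν^{1/6} ≤ m(t,k,η,l) ≤ C·ν^{−1/6}` for all `ν ∈ (0,1)`, `t ≥ 0`, `k ≠ 0`, `η`, `l`. -/
theorem stmt_10 :
    ∃ c : ℝ, 0 < c ∧ ∃ C : ℝ, 0 < C ∧
      ∀ ν : ℝ, 0 < ν → ν < 1 → ∀ t : ℝ, 0 ≤ t → ∀ k : ℤ, k ≠ 0 → ∀ η : ℝ, ∀ l : ℤ,
        c * ν ^ ((1 : ℝ) / 6) ≤ mMult ν t k η l ∧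
        mMult ν t k η l ≤ C * ν ^ (-(1 : ℝ) / 6) := by
  refine ⟨(((10:ℝ)^7) ^ ((1:ℝ)/4))⁻¹, by positivity, ((10:ℝ)^7) ^ ((1:ℝ)/4), by positivity, ?_⟩
  intro ν hν0 hν1 t ht k hk η l
  have hkR : ((k:ℝ)) ≠ 0 := Int.cast_ne_zero.mpr hk
  have hK1 : 1 ≤ (k:ℝ)^2 := by
    have h := Int.one_le_abs hk
    have h2 : (1:ℝ) ≤ |(k:ℝ)| := by exact_mod_cast (by exact_mod_cast h : (1:ℤ) ≤ |k|)
    nlinarith [sq_abs (k:ℝ)]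
  have heq : η - (k:ℝ)*t = (η/(k:ℝ) - t) * k := by field_simp
  have heta : η = (η/(k:ℝ)) * k := (div_mul_cancel₀ η hkR).symm
  have hA0 : (0:ℝ) < ν ^ (-(1:ℝ)/3) := Real.rpow_pos_of_pos hν0 _
  have hA1 : (1:ℝ) ≤ ν ^ (-(1:ℝ)/3) :=
    Real.one_le_rpow_of_pos_of_le_one_of_nonpos hν0 hν1.le (by norm_num)
  have hC1 : (1:ℝ) ≤ ((10:ℝ)^7)^((1:ℝ)/4) := by
    calc (1:ℝ) = (1:ℝ)^((1:ℝ)/4) := (Real.one_rpow _).symm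
      _ ≤ _ := Real.rpow_le_rpow (by norm_num) (by norm_num) (by norm_num)
  set M : ℝ := 1000 * ν ^ (-(1:ℝ)/3) with hMdef
  have hM1 : (1:ℝ) ≤ M := by rw [hMdef]; nlinarith
  unfold mMult
  split_ifs with h1 h2 h3 h4 h5 h6 h7 h8 h9
  · constructor
    · have hx : ν^((1:ℝ)/6) ≤ 1 := Real.rpow_le_one hν0.le hν1.le (by norm_num)
      have hc0 : (0:ℝ) < (((10:ℝ)^7)^((1:ℝ)/4))⁻¹ := by positivity
      have hc1 : (((10:ℝ)^7)^((1:ℝ)/4))⁻¹ ≤ 1 := by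
        rw [inv_le_one₀ (by positivity)]; exact hC1
      nlinarith [mul_nonneg hc0.le (sub_nonneg.mpr hx)]
    · have hy : (1:ℝ) ≤ ν^(-(1:ℝ)/6) :=
        Real.one_le_rpow_of_pos_of_le_one_of_nonpos hν0 hν1.le (by norm_num)
      nlinarith [mul_nonneg (sub_nonneg.mpr hC1) (sub_nonneg.mpr hy)]
  all_goals push_neg at h1
  all_goals have hq : -M ≤ η/(k:ℝ) := by linarith [h1.2]
  · have hb1 : (η^2) ≤ M^2 * (k:ℝ)^2 := by
      calc η^2 = (η/(k:ℝ) * k)^2 := by rw [← heta]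
        _ ≤ M^2*(k:ℝ)^2 := sqb _ _ _ (by linarith) (by linarith)
    have hb2 : ((η - (k:ℝ)*t)^2) ≤ M^2 * (k:ℝ)^2 := by
      calc (η - (k:ℝ)*t)^2 = ((η/(k:ℝ) - t)*(k:ℝ))^2 := by rw [heq]
        _ ≤ M^2*(k:ℝ)^2 := sqb _ _ _ (by linarith) (by linarith)
    have h := auxPow ν hν0 hν1 ((k:ℝ)^2) ((l:ℝ)^2) (η^2) ((η - (k:ℝ)*t)^2) hK1 (sq_nonneg _) (sq_nonneg _) (sq_nonneg _) hb1 hb2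
    simpa only [add_zero] using h
  · have hb1 : (η^2) ≤ M^2 * (k:ℝ)^2 := by
      calc η^2 = (η/(k:ℝ) * k)^2 := by rw [← heta]
        _ ≤ M^2*(k:ℝ)^2 := sqb _ _ _ (by linarith) (by linarith)
    have hb2 : ((M*(k:ℝ))^2) ≤ M^2 * (k:ℝ)^2 := le_of_eq (mul_pow M ((k:ℝ)) 2)
    have h := auxPow ν hν0 hν1 ((k:ℝ)^2) ((l:ℝ)^2) (η^2) ((M*(k:ℝ))^2) hK1 (sq_nonneg _) (sq_nonneg _) (sq_nonneg _) hb1 hb2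
    simpa only [add_zero] using h
  · have hq0 : 0 < η/(k:ℝ) := lt_of_not_ge h2
    have hb1 : ((η - (k:ℝ)*t)^2) ≤ M^2 * (k:ℝ)^2 := by
      calc (η - (k:ℝ)*t)^2 = ((η/(k:ℝ) - t)*(k:ℝ))^2 := by rw [heq]
        _ ≤ M^2*(k:ℝ)^2 := sqb _ _ _ (by linarith) (by linarith)
    have hb2 : (0:ℝ) ≤ M^2 * (k:ℝ)^2 := by positivity
    have h := auxPow ν hν0 hν1 ((k:ℝ)^2) ((l:ℝ)^2) ((η - (k:ℝ)*t)^2) (0:ℝ) hK1 (sq_nonneg _) (sq_nonneg _) le_rfl hb1 hb2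
    simpa only [add_zero] using h
  · have hq0 : 0 < η/(k:ℝ) := lt_of_not_ge h2
    have ht5 : η/(k:ℝ) < t := lt_of_not_ge h5
    have hb1 : (0:ℝ) ≤ M^2 * (k:ℝ)^2 := by positivity
    have hb2 : ((η - (k:ℝ)*t)^2) ≤ M^2 * (k:ℝ)^2 := by
      calc (η - (k:ℝ)*t)^2 = ((η/(k:ℝ) - t)*(k:ℝ))^2 := by rw [heq]
        _ ≤ M^2*(k:ℝ)^2 := sqb _ _ _ (by linarith) (by linarith)
    have h := auxPow ν hν0 hν1 ((k:ℝ)^2) ((l:ℝ)^2) (0:ℝ) ((η - (k:ℝ)*t)^2) hK1 (sq_nonneg _) le_rfl (sq_nonneg _) hb1 hb2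
    simpa only [add_zero] using h
  · have hq0 : 0 < η/(k:ℝ) := lt_of_not_ge h2
    have hb1 : (0:ℝ) ≤ M^2 * (k:ℝ)^2 := by positivity
    have hb2 : ((M*(k:ℝ))^2) ≤ M^2 * (k:ℝ)^2 := le_of_eq (mul_pow M ((k:ℝ)) 2)
    have h := auxPow ν hν0 hν1 ((k:ℝ)^2) ((l:ℝ)^2) (0:ℝ) ((M*(k:ℝ))^2) hK1 (sq_nonneg _) le_rfl (sq_nonneg _) hb1 hb2
    simpa only [add_zero] using h
  · have hq4 : M ≤ η/(k:ℝ) := le_of_not_gt h4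
    have hb1 : ((M*(k:ℝ))^2) ≤ M^2 * (k:ℝ)^2 := le_of_eq (mul_pow M ((k:ℝ)) 2)
    have hb2 : (0:ℝ) ≤ M^2 * (k:ℝ)^2 := by positivity
    have h := auxPow ν hν0 hν1 ((k:ℝ)^2) ((l:ℝ)^2) ((M*(k:ℝ))^2) (0:ℝ) hK1 (sq_nonneg _) (sq_nonneg _) le_rfl hb1 hb2
    simpa only [add_zero] using h
  · have hq4 : M ≤ η/(k:ℝ) := le_of_not_gt h4
    have ht7 : η/(k:ℝ) - M < t := lt_of_not_ge h7
    have hb1 : ((η - (k:ℝ)*t)^2) ≤ M^2 * (k:ℝ)^2 := by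
      calc (η - (k:ℝ)*t)^2 = ((η/(k:ℝ) - t)*(k:ℝ))^2 := by rw [heq]
        _ ≤ M^2*(k:ℝ)^2 := sqb _ _ _ (by linarith) (by linarith)
    have hb2 : (0:ℝ) ≤ M^2 * (k:ℝ)^2 := by positivity
    have h := auxPow ν hν0 hν1 ((k:ℝ)^2) ((l:ℝ)^2) ((η - (k:ℝ)*t)^2) (0:ℝ) hK1 (sq_nonneg _) (sq_nonneg _) le_rfl hb1 hb2
    simpa only [add_zero] using h
  · have hq4 : M ≤ η/(k:ℝ) := le_of_not_gt h4
    have ht8 : η/(k:ℝ) < t := lt_of_not_ge h8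
    have hb1 : (0:ℝ) ≤ M^2 * (k:ℝ)^2 := by positivity
    have hb2 : ((η - (k:ℝ)*t)^2) ≤ M^2 * (k:ℝ)^2 := by
      calc (η - (k:ℝ)*t)^2 = ((η/(k:ℝ) - t)*(k:ℝ))^2 := by rw [heq]
        _ ≤ M^2*(k:ℝ)^2 := sqb _ _ _ (by linarith) (by linarith)
    have h := auxPow ν hν0 hν1 ((k:ℝ)^2) ((l:ℝ)^2) (0:ℝ) ((η - (k:ℝ)*t)^2) hK1 (sq_nonneg _) le_rfl (sq_nonneg _) hb1 hb2
    simpa only [add_zero] using h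
  · have hq4 : M ≤ η/(k:ℝ) := le_of_not_gt h4
    have hb1 : (0:ℝ) ≤ M^2 * (k:ℝ)^2 := by positivity
    have hb2 : ((M*(k:ℝ))^2) ≤ M^2 * (k:ℝ)^2 := le_of_eq (mul_pow M ((k:ℝ)) 2)
    have h := auxPow ν hν0 hν1 ((k:ℝ)^2) ((l:ℝ)^2) (0:ℝ) ((M*(k:ℝ))^2) hK1 (sq_nonneg _) le_rfl (sq_nonneg _) hb1 hb2
    simpa only [add_zero] using h
end

section
/- There exists a universal constant C > 0 such that for every ν ∈ (0,1), every t ≥ 0, every nonzero integer k, every η ∈ ℝ and every integer l, the multiplier m satisfies (k²+l²)^{1/4}/p(t)^{1/4} ≤ C·m(t,k,η,l) and m(t,k,η,l) ≤ C·p(t)^{1/4}/(k²+l²)^{1/4}, where p(t) := k² + (η−kt)² + l². -/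
lemma key_ineq (x y z w : ℝ) (hx : 0 ≤ x) (hy : 0 < y) (hz : 0 ≤ z) (hw : 0 < w)
    (h : x * w ≤ 2 * (z * y)) :
    (x / y) ^ ((1:ℝ)/4) ≤ 2 * (z / w) ^ ((1:ℝ)/4) := by
  have h1 : x / y ≤ 2 * z / w := (div_le_div_iff₀ hy hw).mpr (by linarith)
  have h2 : (x/y)^((1:ℝ)/4) ≤ (2*z/w)^((1:ℝ)/4) :=
    Real.rpow_le_rpow (by positivity) h1 (by norm_num)
  have h3 : (2*z/w)^((1:ℝ)/4) = (2:ℝ)^((1:ℝ)/4) * (z/w)^((1:ℝ)/4) := by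
    rw [mul_div_assoc, Real.mul_rpow (by norm_num) (by positivity)]
  have h4 : (2:ℝ)^((1:ℝ)/4) ≤ 2 := by
    calc (2:ℝ)^((1:ℝ)/4) ≤ (2:ℝ)^(1:ℝ) :=
          Real.rpow_le_rpow_of_exponent_le (by norm_num) (by norm_num)
      _ = 2 := Real.rpow_one 2
  have h5 : (0:ℝ) ≤ (z/w)^((1:ℝ)/4) := by positivity
  calc (x/y)^((1:ℝ)/4) ≤ (2:ℝ)^((1:ℝ)/4) * (z/w)^((1:ℝ)/4) := h3 ▸ h2
    _ ≤ 2 * (z/w)^((1:ℝ)/4) := by nlinarith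

lemma lower_ineq (a p x y : ℝ) (hA : 0 < a) (hP : 0 < p) (hx : 0 ≤ x) (hy : 0 < y)
    (h : a * y ≤ 2 * (x * p)) :
    a ^ ((1:ℝ)/4) / p ^ ((1:ℝ)/4) ≤ 2 * (x / y) ^ ((1:ℝ)/4) := by
  rw [← Real.div_rpow hA.le hP.le]
  exact key_ineq a p x y hA.le hP hx hy h

lemma upper_ineq (a p x y : ℝ) (hA : 0 < a) (hP : 0 < p) (hx : 0 ≤ x) (hy : 0 < y)
    (h : x * a ≤ 2 * (p * y)) :
    (x / y) ^ ((1:ℝ)/4) ≤ 2 * p ^ ((1:ℝ)/4) / a ^ ((1:ℝ)/4) := by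
  rw [mul_div_assoc, ← Real.div_rpow hP.le hA.le]
  exact key_ineq x y p a hx hy hP.le hA h




set_option maxHeartbeats 4000000 in
/-- Frequency bound (4.11-2): there is a universal constant `C > 0` with
`(k²+l²)^{1/4}/p(t)^{1/4} ≤ C·m(t,k,η,l)` and `m(t,k,η,l) ≤ C·p(t)^{1/4}/(k²+l²)^{1/4}`,
where `p(t) = k² + (η−kt)² + l²`. -/
theorem stmt_11 :
    ∃ C : ℝ, 0 < C ∧
      ∀ ν : ℝ, 0 < ν → ν < 1 → ∀ t : ℝ, 0 ≤ t → ∀ k : ℤ, k ≠ 0 → ∀ η : ℝ, ∀ l : ℤ,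
        ((k : ℝ) ^ 2 + (l : ℝ) ^ 2) ^ ((1 : ℝ) / 4) /
            ((k : ℝ) ^ 2 + (η - k * t) ^ 2 + (l : ℝ) ^ 2) ^ ((1 : ℝ) / 4) ≤
          C * mMult ν t k η l ∧
        mMult ν t k η l ≤
          C * ((k : ℝ) ^ 2 + (η - k * t) ^ 2 + (l : ℝ) ^ 2) ^ ((1 : ℝ) / 4) /
            ((k : ℝ) ^ 2 + (l : ℝ) ^ 2) ^ ((1 : ℝ) / 4) := by

  refine ⟨2, by norm_num, ?_⟩
  intro ν hν hν1 t ht k hk η l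
  have hc : (k:ℝ) ≠ 0 := Int.cast_ne_zero.mpr hk
  have hc2 : (0:ℝ) < (k:ℝ)^2 := by positivity
  obtain ⟨s, rfl⟩ : ∃ s, η = s * (k:ℝ) := ⟨η / k, (div_mul_cancel₀ η hc).symm⟩
  have hsc : s * (k:ℝ) / (k:ℝ) = s := mul_div_cancel_right₀ s hc
  set N := ν ^ (-(1:ℝ)/3) with hNdef
  have hN : 0 < N := by rw [hNdef]; positivity
  have hl2 : (0:ℝ) ≤ (l:ℝ)^2 := sq_nonneg _
  unfold mMult
  simp only [hsc]
  set A := (k:ℝ)^2 + (l:ℝ)^2 with hAdef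
  set P := (k:ℝ)^2 + (s*(k:ℝ) - (k:ℝ)*t)^2 + (l:ℝ)^2 with hPdef
  set Q := (k:ℝ)^2 + (s*(k:ℝ))^2 + (l:ℝ)^2 with hQdef
  set R := (k:ℝ)^2 + (1000*N*(k:ℝ))^2 + (l:ℝ)^2 with hRdef
  have hA : (0:ℝ) < A := by rw [hAdef]; linarith
  have hP : (0:ℝ) < P := by rw [hPdef]; nlinarith [sq_nonneg (s*(k:ℝ) - (k:ℝ)*t)]
  have hQ : (0:ℝ) < Q := by rw [hQdef]; nlinarith [sq_nonneg (s*(k:ℝ))]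
  have hR : (0:ℝ) < R := by rw [hRdef]; nlinarith [sq_nonneg (1000*N*(k:ℝ))]
  have hap : A ≤ P := by rw [hAdef, hPdef]; nlinarith [sq_nonneg (s*(k:ℝ) - (k:ℝ)*t)]
  have haq : A ≤ Q := by rw [hAdef, hQdef]; nlinarith [sq_nonneg (s*(k:ℝ))]
  have har : A ≤ R := by rw [hAdef, hRdef]; nlinarith [sq_nonneg (1000*N*(k:ℝ))]
  split_ifs with h1 h2 h3 h4 h5 h6 h7 h8 h9
  · -- m = 1
    constructor
    · have h14 : A ^ ((1:ℝ)/4) ≤ P ^ ((1:ℝ)/4) := Real.rpow_le_rpow hA.le hap (by norm_num)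
      have hPp : (0:ℝ) < P ^ ((1:ℝ)/4) := Real.rpow_pos_of_pos hP _
      rw [mul_one]
      calc _ ≤ (1:ℝ) := (div_le_one hPp).mpr h14
        _ ≤ 2 := by norm_num
    · have h14 : A ^ ((1:ℝ)/4) ≤ P ^ ((1:ℝ)/4) := Real.rpow_le_rpow hA.le hap (by norm_num)
      have hAp : (0:ℝ) < A ^ ((1:ℝ)/4) := Real.rpow_pos_of_pos hA _
      rw [mul_div_assoc]
      have : (1:ℝ) ≤ P ^ ((1:ℝ)/4) / A ^ ((1:ℝ)/4) := (one_le_div hAp).mpr h14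
      linarith
  · -- 2a
    push_neg at h1
    obtain ⟨-, hs1⟩ := h1
    have hqp : Q ≤ P := by
      rw [hQdef, hPdef]
      nlinarith [mul_nonneg (mul_nonneg hc2.le ht) (by linarith : (0:ℝ) ≤ t - 2*s)]
    constructor
    · exact lower_ineq _ _ _ _ hA hP hQ.le hP (by nlinarith)
    · exact upper_ineq _ _ _ _ hA hP hQ.le hP
        (by nlinarith [mul_le_mul hqp hap hA.le hP.le])
  · -- 2b
    push_neg at h1 h3
    obtain ⟨-, hs1⟩ := h1
    have hqr : Q ≤ R := by
      rw [hQdef, hRdef]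
      nlinarith [mul_nonneg (mul_nonneg (by linarith : (0:ℝ) ≤ 1000*N + s)
        (by linarith : (0:ℝ) ≤ 1000*N - s)) hc2.le]
    have hrp : R ≤ P := by
      rw [hRdef, hPdef]
      nlinarith [mul_nonneg (mul_nonneg (by linarith : (0:ℝ) ≤ t - s - 1000*N)
        (by linarith : (0:ℝ) ≤ t - s + 1000*N)) hc2.le]
    constructor
    · exact lower_ineq _ _ _ _ hA hP hQ.le hR
        (by nlinarith [mul_le_mul haq hrp hR.le hQ.le])
    · exact upper_ineq _ _ _ _ hA hP hQ.le hR
        (by nlinarith [mul_le_mul hqr hap hA.le hR.le])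
  · -- 3a
    constructor
    · exact lower_ineq _ _ _ _ hA hP hP.le hA
        (by nlinarith [mul_le_mul hap hap hA.le hP.le])
    · exact upper_ineq _ _ _ _ hA hP hP.le hA (by nlinarith)
  · -- 3b
    constructor
    · exact lower_ineq _ _ _ _ hA hP hA.le hP (by nlinarith)
    · exact upper_ineq _ _ _ _ hA hP hA.le hP
        (by nlinarith [mul_le_mul hap hap hA.le hP.le])
  · -- 3c
    push_neg at h6
    have hrp : R ≤ P := by
      rw [hRdef, hPdef]
      nlinarith [mul_nonneg (mul_nonneg (by linarith : (0:ℝ) ≤ t - s - 1000*N)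
        (by linarith : (0:ℝ) ≤ t - s + 1000*N)) hc2.le]
    constructor
    · exact lower_ineq _ _ _ _ hA hP hA.le hR
        (by nlinarith [mul_le_mul_of_nonneg_left hrp hA.le])
    · exact upper_ineq _ _ _ _ hA hP hA.le hR
        (by nlinarith [mul_le_mul hap har hA.le hP.le])
  · -- 4a
    push_neg at h4
    have hrp : R ≤ P := by
      rw [hRdef, hPdef]
      nlinarith [mul_nonneg (mul_nonneg (by linarith : (0:ℝ) ≤ s - t - 1000*N)
        (by linarith : (0:ℝ) ≤ s - t + 1000*N)) hc2.le]
    constructor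
    · exact lower_ineq _ _ _ _ hA hP hR.le hA
        (by nlinarith [mul_le_mul har hap hA.le hR.le])
    · exact upper_ineq _ _ _ _ hA hP hR.le hA
        (by nlinarith [mul_le_mul_of_nonneg_right hrp hA.le])
  · -- 4b
    constructor
    · exact lower_ineq _ _ _ _ hA hP hP.le hA
        (by nlinarith [mul_le_mul hap hap hA.le hP.le])
    · exact upper_ineq _ _ _ _ hA hP hP.le hA (by nlinarith)
  · -- 4c
    constructor
    · exact lower_ineq _ _ _ _ hA hP hA.le hP (by nlinarith)
    · exact upper_ineq _ _ _ _ hA hP hA.le hP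
        (by nlinarith [mul_le_mul hap hap hA.le hP.le])
  · -- 4d
    push_neg at h9
    have hrp : R ≤ P := by
      rw [hRdef, hPdef]
      nlinarith [mul_nonneg (mul_nonneg (by linarith : (0:ℝ) ≤ t - s - 1000*N)
        (by linarith : (0:ℝ) ≤ t - s + 1000*N)) hc2.le]
    constructor
    · exact lower_ineq _ _ _ _ hA hP hA.le hR
        (by nlinarith [mul_le_mul_of_nonneg_left hrp hA.le])
    · exact upper_ineq _ _ _ _ hA hP hA.le hR
        (by nlinarith [mul_le_mul hap har hA.le hP.le])
end

section
/- For every nonzero integer k, every integer l, every η ∈ ℝ and every t ≥ 0, one has ∫₀ᵗ |k|·|l|·|η − kτ| / ((k² + (η − kτ)² + l²)·√(k² + (η − kτ)²)) dτ ≤ π. Consequently, if α > 0 and B > 0, the multiplier M₆(t,k,η,l) := exp( −(α/√B) ∫₀ᵗ |k||l||η−kτ| / ((k²+(η−kτ)²+l²)√(k²+(η−kτ)²)) dτ ) satisfies exp(−απ/√B) ≤ M₆(t,k,η,l) ≤ 1. -/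
/-!
The integrand is `|g'|` for `g τ = arctan (|l| / √(k² + (η - kτ)²))`. Since `k² + (η - kτ)²` is
decreasing up to `τ = η / k` and increasing afterwards, `g` rises to its peak at `η / k` and falls
after it, so its total variation on any interval is at most `2 g (η / k) < 2 · π / 2 = π`.
-/

open Real Set intervalIntegral

section Variation

variable {g g' : ℝ → ℝ} {a b c : ℝ}

theorem integral_abs_deriv_of_nonneg (hab : a ≤ b) (hg : ∀ x, HasDerivAt g (g' x) x)
    (hg' : Continuous g') (hpos : ∀ x ∈ Icc a b, 0 ≤ g' x) :
    ∫ x in a..b, |g' x| = g b - g a := by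
  rw [integral_congr fun x hx => abs_of_nonneg (hpos x (by rwa [uIcc_of_le hab] at hx))]
  exact integral_eq_sub_of_hasDerivAt (fun x _ => hg x) (hg'.intervalIntegrable a b)

theorem integral_abs_deriv_of_nonpos (hab : a ≤ b) (hg : ∀ x, HasDerivAt g (g' x) x)
    (hg' : Continuous g') (hneg : ∀ x ∈ Icc a b, g' x ≤ 0) :
    ∫ x in a..b, |g' x| = g a - g b := by
  rw [integral_congr fun x hx => abs_of_nonpos (hneg x (by rwa [uIcc_of_le hab] at hx)),
    integral_neg, integral_eq_sub_of_hasDerivAt (fun x _ => hg x) (hg'.intervalIntegrable a b),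
    neg_sub]

theorem integral_abs_deriv_le_two_mul_of_peak (hab : a ≤ b) (hg : ∀ x, HasDerivAt g (g' x) x)
    (hg' : Continuous g') (hpos : ∀ x ≤ c, 0 ≤ g' x) (hneg : ∀ x, c ≤ x → g' x ≤ 0)
    (hg0 : ∀ x, 0 ≤ g x) :
    ∫ x in a..b, |g' x| ≤ 2 * g c := by
  have hint : ∀ u v, IntervalIntegrable (fun x => |g' x|) MeasureTheory.volume u v :=
    fun u v => hg'.abs.intervalIntegrable u v
  calc ∫ x in a..b, |g' x|
      ≤ ∫ x in min a c..max b c, |g' x| :=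
        integral_mono_interval (min_le_left a c) hab (le_max_left b c)
          (Filter.Eventually.of_forall fun x => abs_nonneg (g' x)) (hint _ _)
    _ = (∫ x in min a c..c, |g' x|) + ∫ x in c..max b c, |g' x| :=
        (integral_add_adjacent_intervals (hint _ _) (hint _ _)).symm
    _ = (g c - g (min a c)) + (g c - g (max b c)) := by
        rw [integral_abs_deriv_of_nonneg (min_le_right a c) hg hg' fun x hx => hpos x hx.2,
          integral_abs_deriv_of_nonpos (le_max_right b c) hg hg' fun x hx => hneg x hx.1]
    _ ≤ 2 * g c := by linarith [hg0 (min a c), hg0 (max b c)]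

end Variation

section GhostWeight

variable {k l η : ℝ}

theorem hasDerivAt_arctan_abs_div_sqrt (hk : k ≠ 0) (τ : ℝ) :
    HasDerivAt (fun τ => arctan (|l| / √(k ^ 2 + (η - k * τ) ^ 2)))
      (k * |l| * (η - k * τ) /
        ((k ^ 2 + (η - k * τ) ^ 2 + l ^ 2) * √(k ^ 2 + (η - k * τ) ^ 2))) τ := by
  have hh : 0 < k ^ 2 + (η - k * τ) ^ 2 := by positivity
  have hs : √(k ^ 2 + (η - k * τ) ^ 2) ≠ 0 := (sqrt_pos.2 hh).ne'
  have hu : HasDerivAt (fun τ => k ^ 2 + (η - k * τ) ^ 2) (2 * (η - k * τ) * -k) τ := by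
    simpa using (((hasDerivAt_id τ).const_mul k).const_sub η |>.pow 2).const_add (k ^ 2)
  refine (((hasDerivAt_const τ |l|).div (hu.sqrt hh.ne') hs).arctan).congr_deriv ?_
  rw [Pi.div_apply, div_pow, sq_sqrt hh.le, sq_abs]
  field_simp
  ring

theorem abs_deriv_arctan_abs_div_sqrt (τ : ℝ) :
    |k * |l| * (η - k * τ) /
        ((k ^ 2 + (η - k * τ) ^ 2 + l ^ 2) * √(k ^ 2 + (η - k * τ) ^ 2))| =
      |k| * |l| * |η - k * τ| /
        ((k ^ 2 + (η - k * τ) ^ 2 + l ^ 2) * √(k ^ 2 + (η - k * τ) ^ 2)) := by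
  have hden : 0 ≤ (k ^ 2 + (η - k * τ) ^ 2 + l ^ 2) * √(k ^ 2 + (η - k * τ) ^ 2) := by positivity
  rw [abs_div, abs_of_nonneg hden, abs_mul, abs_mul, abs_abs]

theorem integral_ghost_le_pi (hk : k ≠ 0) {t : ℝ} (ht : 0 ≤ t) :
    ∫ τ in (0 : ℝ)..t, |k| * |l| * |η - k * τ| /
        ((k ^ 2 + (η - k * τ) ^ 2 + l ^ 2) * √(k ^ 2 + (η - k * τ) ^ 2)) ≤ π := by
  have hden : ∀ τ, 0 < (k ^ 2 + (η - k * τ) ^ 2 + l ^ 2) * √(k ^ 2 + (η - k * τ) ^ 2) :=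
    fun τ => by positivity
  have hcont : Continuous fun τ => k * |l| * (η - k * τ) /
      ((k ^ 2 + (η - k * τ) ^ 2 + l ^ 2) * √(k ^ 2 + (η - k * τ) ^ 2)) :=
    (by fun_prop : Continuous _).div (by fun_prop) fun τ => (hden τ).ne'
  have hturn : ∀ τ, k * |l| * (η - k * τ) = |l| * k ^ 2 * (η / k - τ) := fun τ => by
    field_simp
  have hpos : ∀ τ ≤ η / k, 0 ≤ k * |l| * (η - k * τ) /
      ((k ^ 2 + (η - k * τ) ^ 2 + l ^ 2) * √(k ^ 2 + (η - k * τ) ^ 2)) := fun τ hτ => by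
    rw [hturn]
    have := sub_nonneg.2 hτ
    positivity
  have hneg : ∀ τ, η / k ≤ τ → k * |l| * (η - k * τ) /
      ((k ^ 2 + (η - k * τ) ^ 2 + l ^ 2) * √(k ^ 2 + (η - k * τ) ^ 2)) ≤ 0 := fun τ hτ => by
    rw [hturn]
    exact div_nonpos_of_nonpos_of_nonneg
      (mul_nonpos_of_nonneg_of_nonpos (by positivity) (sub_nonpos.2 hτ)) (hden τ).le
  simp_rw [← abs_deriv_arctan_abs_div_sqrt]
  calc _ ≤ 2 * arctan (|l| / √(k ^ 2 + (η - k * (η / k)) ^ 2)) :=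
        integral_abs_deriv_le_two_mul_of_peak
          (g := fun τ => arctan (|l| / √(k ^ 2 + (η - k * τ) ^ 2))) ht
          (hasDerivAt_arctan_abs_div_sqrt hk) hcont hpos hneg
          fun τ => arctan_nonneg.2 (by positivity)
    _ ≤ π := by linarith [arctan_lt_pi_div_two (|l| / √(k ^ 2 + (η - k * (η / k)) ^ 2))]

theorem integral_ghost_nonneg {t : ℝ} (ht : 0 ≤ t) :
    0 ≤ ∫ τ in (0 : ℝ)..t, |k| * |l| * |η - k * τ| /
        ((k ^ 2 + (η - k * τ) ^ 2 + l ^ 2) * √(k ^ 2 + (η - k * τ) ^ 2)) :=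
  integral_nonneg ht fun τ _ => by positivity

end GhostWeight

/-- The integral bound for the ghost multiplier `M₆`:
`∫₀ᵗ |k||l||η−kτ| / ((k²+(η−kτ)²+l²)√(k²+(η−kτ)²)) dτ ≤ π` for `k ≠ 0`, and hence for
`α > 0`, `B > 0` the multiplier
`M₆ = exp(−(α/√B)·∫₀ᵗ …)` satisfies `exp(−απ/√B) ≤ M₆ ≤ 1`. -/
theorem stmt_13 (k : ℤ) (hk : k ≠ 0) (l : ℤ) (η : ℝ) (t : ℝ) (ht : 0 ≤ t) :
    (∫ τ in (0 : ℝ)..t,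
        |(k : ℝ)| * |(l : ℝ)| * |η - k * τ| /
          ((((k : ℝ) ^ 2 + (η - k * τ) ^ 2 + (l : ℝ) ^ 2)) *
            Real.sqrt ((k : ℝ) ^ 2 + (η - k * τ) ^ 2))) ≤ Real.pi ∧
    ∀ α B : ℝ, 0 < α → 0 < B →
      Real.exp (-(α * Real.pi / Real.sqrt B)) ≤
        Real.exp (-(α / Real.sqrt B) *
          ∫ τ in (0 : ℝ)..t,
            |(k : ℝ)| * |(l : ℝ)| * |η - k * τ| /
              ((((k : ℝ) ^ 2 + (η - k * τ) ^ 2 + (l : ℝ) ^ 2)) *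
                Real.sqrt ((k : ℝ) ^ 2 + (η - k * τ) ^ 2))) ∧
      Real.exp (-(α / Real.sqrt B) *
          ∫ τ in (0 : ℝ)..t,
            |(k : ℝ)| * |(l : ℝ)| * |η - k * τ| /
              ((((k : ℝ) ^ 2 + (η - k * τ) ^ 2 + (l : ℝ) ^ 2)) *
                Real.sqrt ((k : ℝ) ^ 2 + (η - k * τ) ^ 2))) ≤ 1 := by
  have hI0 := integral_ghost_nonneg (k := (k : ℝ)) (l := (l : ℝ)) (η := η) ht
  have hIπ := integral_ghost_le_pi (l := (l : ℝ)) (η := η) (Int.cast_ne_zero.2 hk) ht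
  refine ⟨hIπ, fun α B hα hB => ?_⟩
  have hc : 0 ≤ α / √B := by positivity
  rw [mul_div_right_comm, neg_mul]
  exact ⟨exp_le_exp.2 (neg_le_neg (mul_le_mul_of_nonneg_left hIπ hc)),
    exp_le_one_iff.2 (neg_nonpos.2 (mul_nonneg hc hI0))⟩
end

section
/- For every ν > 0, every t ≥ 0, every nonzero integer k, every η ∈ ℝ and every integer l, one has 1 ≤ 2·( ν^{−1/6}·√( ν^{1/3} / ((ν^{1/3}(t − η/k))² + 1) ) + ν^{1/3}·√(k² + (η − kt)² + l²) ). -/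
/-!
Write `a = ν^{1/3}` and `u = t - η/k`, so that `η - k t = -k u`. Since `ν^{-1/6} √(ν^{1/3}) = 1`,
the first term is `1/√(1 + x²)` with `x = a|u|`, and `|k| ≥ 1` makes the second term at least `x`.
Finally `√(1 + x²) ≤ 1 + x` gives `1/√(1 + x²) + x ≥ 1/(1 + x) + x ≥ 1` for `x ≥ 0`,
so the inequality holds even without the factor `2`.
-/

open Real

lemma one_le_inv_sqrt_sq_add_one_add {x : ℝ} (hx : 0 ≤ x) : 1 ≤ (√(x ^ 2 + 1))⁻¹ + x := by
  have hsqrt : √(x ^ 2 + 1) ≤ 1 + x :=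
    sqrt_le_iff.mpr ⟨by positivity, by nlinarith⟩
  calc 1 ≤ (1 + x)⁻¹ + x := by
        rw [← sub_le_iff_le_add, inv_eq_one_div, le_div_iff₀ (by linarith)]
        nlinarith
    _ ≤ (√(x ^ 2 + 1))⁻¹ + x := by gcongr

lemma rpow_neg_sixth_mul_sqrt_rpow_third_div {ν : ℝ} (hν : 0 < ν) (y : ℝ) :
    ν ^ (-(1 : ℝ) / 6) * √(ν ^ ((1 : ℝ) / 3) / y) = (√y)⁻¹ := by
  have hroot : √(ν ^ ((1 : ℝ) / 3)) = ν ^ ((1 : ℝ) / 6) := by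
    rw [sqrt_eq_rpow, ← rpow_mul hν.le]; norm_num
  rw [sqrt_div (rpow_nonneg hν.le _), hroot, mul_div_assoc', ← rpow_add hν]
  norm_num

lemma abs_le_sqrt_add_mul_sq_add {a b k u : ℝ} (ha : 0 ≤ a) (hb : 0 ≤ b) (hk : 1 ≤ |k|) :
    |u| ≤ √(a + (k * u) ^ 2 + b) := by
  rw [← sqrt_sq_eq_abs]
  apply sqrt_le_sqrt
  have : u ^ 2 ≤ (k * u) ^ 2 := by
    rw [mul_pow, ← sq_abs k]
    exact le_mul_of_one_le_left (sq_nonneg u) (one_le_pow₀ hk)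
  linarith

theorem stmt_14_general (ν : ℝ) (hν : 0 < ν) (t : ℝ) (k : ℤ) (hk : k ≠ 0)
    (η : ℝ) (l : ℤ) :
    1 ≤ 2 * (ν ^ (-(1 : ℝ) / 6) *
        Real.sqrt (ν ^ ((1 : ℝ) / 3) / ((ν ^ ((1 : ℝ) / 3) * (t - η / (k : ℝ))) ^ 2 + 1)) +
      ν ^ ((1 : ℝ) / 3) * Real.sqrt ((k : ℝ) ^ 2 + (η - k * t) ^ 2 + (l : ℝ) ^ 2)) := by
  have hk' : (k : ℝ) ≠ 0 := Int.cast_ne_zero.mpr hk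
  have hk1 : 1 ≤ |(k : ℝ)| := by exact_mod_cast Int.one_le_abs hk
  have ha : 0 < ν ^ ((1 : ℝ) / 3) := rpow_pos_of_pos hν _
  set u := t - η / (k : ℝ)
  set x := ν ^ ((1 : ℝ) / 3) * |u|
  have hshear : η - k * t = -(k * u) := by
    simp only [u]; field_simp; ring
  have hfirst : ν ^ (-(1 : ℝ) / 6) *
      √(ν ^ ((1 : ℝ) / 3) / ((ν ^ ((1 : ℝ) / 3) * u) ^ 2 + 1)) = (√(x ^ 2 + 1))⁻¹ := by
    rw [rpow_neg_sixth_mul_sqrt_rpow_third_div hν, mul_pow, mul_pow, sq_abs]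
  have hsecond : x ≤ ν ^ ((1 : ℝ) / 3) * √((k : ℝ) ^ 2 + (η - k * t) ^ 2 + (l : ℝ) ^ 2) := by
    rw [hshear, neg_sq]
    exact mul_le_mul_of_nonneg_left
      (abs_le_sqrt_add_mul_sq_add (sq_nonneg _) (sq_nonneg _) hk1) ha.le
  have hx : 0 ≤ x := by positivity
  have hsum := one_le_inv_sqrt_sq_add_one_add hx
  rw [hfirst]
  linarith [inv_nonneg.mpr (sqrt_nonneg (x ^ 2 + 1))]

/-- Lemma 4.2(2) of the paper, inequality (4.15): for `ν > 0`, `t ≥ 0`, `k ≠ 0`, `η`, `l`,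
`1 ≤ 2(ν^{−1/6}·√(−Ṁ₁/M₁) + ν^{1/3}·|k, η−kt, l|)`, where
`−Ṁ₁/M₁ = ν^{1/3}/((ν^{1/3}(t − η/k))² + 1)`. -/
theorem stmt_14 (ν : ℝ) (hν : 0 < ν) (t : ℝ) (ht : 0 ≤ t) (k : ℤ) (hk : k ≠ 0)
    (η : ℝ) (l : ℤ) :
    1 ≤ 2 * (ν ^ (-(1 : ℝ) / 6) *
        Real.sqrt (ν ^ ((1 : ℝ) / 3) / ((ν ^ ((1 : ℝ) / 3) * (t - η / (k : ℝ))) ^ 2 + 1)) +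
      ν ^ ((1 : ℝ) / 3) * Real.sqrt ((k : ℝ) ^ 2 + (η - k * t) ^ 2 + (l : ℝ) ^ 2)) :=
  stmt_14_general ν hν t k hk η l
end

section
/- Let ν > 0, let k be a nonzero integer, l an integer, and s ∈ ℝ, and set p := k² + s² + l² and p_h := k² + s². Suppose m > 0 satisfies m ≤ ν^{−1/6} and m ≤ p^{1/4}/(k²+l²)^{1/4}. Then m·p^{3/4}·p_h^{−1/2} ≤ 2·( |l|^{3/2}/√p_h + ν^{−1/6}·p^{1/4} ). -/
set_option maxHeartbeats 1000000 in
/-- Multiplier inequality (multi1): if `m > 0` with `m ≤ ν^{−1/6}` and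
`m ≤ p^{1/4}/(k²+l²)^{1/4}`, where `p = k² + s² + l²` and `p_h = k² + s²`, then
`m·p^{3/4}/√p_h ≤ 2(|l|^{3/2}/√p_h + ν^{−1/6}·p^{1/4})`. -/
theorem stmt_17 (ν : ℝ) (hν : 0 < ν) (k : ℤ) (hk : k ≠ 0) (l : ℤ) (s : ℝ)
    (p ph m : ℝ)
    (hp : p = (k : ℝ) ^ 2 + s ^ 2 + (l : ℝ) ^ 2)
    (hph : ph = (k : ℝ) ^ 2 + s ^ 2)
    (hm : 0 < m)
    (hm1 : m ≤ ν ^ (-(1 : ℝ) / 6))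
    (hm2 : m ≤ p ^ ((1 : ℝ) / 4) / ((k : ℝ) ^ 2 + (l : ℝ) ^ 2) ^ ((1 : ℝ) / 4)) :
    m * p ^ ((3 : ℝ) / 4) / Real.sqrt ph ≤
      2 * (|(l : ℝ)| ^ ((3 : ℝ) / 2) / Real.sqrt ph +
        ν ^ (-(1 : ℝ) / 6) * p ^ ((1 : ℝ) / 4)) := by
  have hk1 : (1 : ℝ) ≤ (k : ℝ) ^ 2 := by
    have : (1 : ℤ) ≤ k ^ 2 := by nlinarith [Int.one_le_abs hk, sq_abs k, abs_nonneg k]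
    exact_mod_cast this
  have hph0 : 0 < ph := by rw [hph]; nlinarith [sq_nonneg s]
  have hp0 : 0 < p := by rw [hp]; nlinarith [sq_nonneg s, sq_nonneg ((l : ℝ))]
  have hsph : 0 < Real.sqrt ph := Real.sqrt_pos.mpr hph0
  have hν' : 0 < ν ^ (-(1 : ℝ) / 6) := Real.rpow_pos_of_pos hν _
  have hp14 : 0 < p ^ ((1 : ℝ) / 4) := Real.rpow_pos_of_pos hp0 _
  have hp34 : 0 < p ^ ((3 : ℝ) / 4) := Real.rpow_pos_of_pos hp0 _
  have hsplit : p ^ ((3 : ℝ) / 4) = p ^ ((1 : ℝ) / 4) * p ^ ((1 : ℝ) / 2) := by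
    rw [← Real.rpow_add hp0]; norm_num
  have hlnn : 0 ≤ |(l : ℝ)| ^ ((3 : ℝ) / 2) / Real.sqrt ph := by positivity
  rcases le_total ((l : ℝ) ^ 2) ph with h | h
  · -- p ≤ 2 ph
    have hple : p ≤ 2 * ph := by rw [hp]; rw [hph] at h ⊢; linarith
    have h12 : p ^ ((1 : ℝ) / 2) ≤ Real.sqrt 2 * Real.sqrt ph := by
      rw [← Real.sqrt_eq_rpow]
      calc Real.sqrt p ≤ Real.sqrt (2 * ph) := Real.sqrt_le_sqrt hple
        _ = Real.sqrt 2 * Real.sqrt ph := Real.sqrt_mul (by norm_num) ph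
    have hbig : m * p ^ ((3 : ℝ) / 4) ≤
        ν ^ (-(1 : ℝ) / 6) * p ^ ((1 : ℝ) / 4) * (Real.sqrt 2 * Real.sqrt ph) := by
      rw [hsplit]
      have h1 : m * (p ^ ((1 : ℝ) / 4) * p ^ ((1 : ℝ) / 2)) ≤
          ν ^ (-(1 : ℝ) / 6) * (p ^ ((1 : ℝ) / 4) * p ^ ((1 : ℝ) / 2)) := by
        apply mul_le_mul_of_nonneg_right hm1; positivity
      calc m * (p ^ ((1 : ℝ) / 4) * p ^ ((1 : ℝ) / 2)) ≤
          ν ^ (-(1 : ℝ) / 6) * (p ^ ((1 : ℝ) / 4) * p ^ ((1 : ℝ) / 2)) := h1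
        _ ≤ ν ^ (-(1 : ℝ) / 6) * p ^ ((1 : ℝ) / 4) * (Real.sqrt 2 * Real.sqrt ph) := by
            rw [mul_assoc]
            apply mul_le_mul_of_nonneg_left _ hν'.le
            exact mul_le_mul_of_nonneg_left h12 hp14.le
    have hs2 : Real.sqrt 2 ≤ 2 := by
      nlinarith [Real.sq_sqrt (by norm_num : (0:ℝ) ≤ 2), Real.sqrt_nonneg 2]
    have : m * p ^ ((3 : ℝ) / 4) / Real.sqrt ph ≤
        2 * (ν ^ (-(1 : ℝ) / 6) * p ^ ((1 : ℝ) / 4)) := by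
      rw [div_le_iff₀ hsph]
      calc m * p ^ ((3 : ℝ) / 4) ≤
          ν ^ (-(1 : ℝ) / 6) * p ^ ((1 : ℝ) / 4) * (Real.sqrt 2 * Real.sqrt ph) := hbig
        _ ≤ 2 * (ν ^ (-(1 : ℝ) / 6) * p ^ ((1 : ℝ) / 4)) * Real.sqrt ph := by
            nlinarith [mul_pos (mul_pos hν' hp14) hsph, hs2]
    linarith
  · -- ph ≤ l², so l ≠ 0
    have hl0 : (0:ℝ) < |(l : ℝ)| := by
      rcases eq_or_ne (l:ℝ) 0 with h0 | h0
      · exfalso; rw [h0] at h; nlinarith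
      · exact abs_pos.mpr h0
    have hple : p ≤ 2 * (l : ℝ) ^ 2 := by rw [hp]; rw [hph] at h; nlinarith
    have hA : |(l : ℝ)| ^ ((1 : ℝ) / 2) ≤ ((k : ℝ) ^ 2 + (l : ℝ) ^ 2) ^ ((1 : ℝ) / 4) := by
      have e1 : |(l : ℝ)| ^ ((1 : ℝ) / 2) = ((l : ℝ) ^ 2) ^ ((1 : ℝ) / 4) := by
        rw [← sq_abs, ← Real.rpow_natCast |(l:ℝ)| 2, ← Real.rpow_mul (abs_nonneg _)]
        norm_num
      rw [e1]
      exact Real.rpow_le_rpow (by positivity) (by nlinarith) (by norm_num)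
    have hkl0 : (0:ℝ) < ((k : ℝ) ^ 2 + (l : ℝ) ^ 2) ^ ((1 : ℝ) / 4) :=
      Real.rpow_pos_of_pos (by linarith [sq_nonneg ((l:ℝ)), hk1]) _
    have hl12 : (0:ℝ) < |(l : ℝ)| ^ ((1 : ℝ) / 2) := Real.rpow_pos_of_pos hl0 _
    have hmle : m ≤ p ^ ((1 : ℝ) / 4) / |(l : ℝ)| ^ ((1 : ℝ) / 2) := by
      calc m ≤ p ^ ((1:ℝ)/4) / ((k : ℝ) ^ 2 + (l : ℝ) ^ 2) ^ ((1 : ℝ) / 4) := hm2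
        _ ≤ p ^ ((1:ℝ)/4) / |(l : ℝ)| ^ ((1 : ℝ) / 2) :=
          div_le_div_of_nonneg_left hp14.le hl12 hA
    have hkey : m * p ^ ((3 : ℝ) / 4) ≤ 2 * |(l : ℝ)| ^ ((3 : ℝ) / 2) := by
      have e2 : |(l : ℝ)| ^ ((3 : ℝ) / 2) * |(l : ℝ)| ^ ((1 : ℝ) / 2) = (l : ℝ) ^ 2 := by
        rw [← Real.rpow_add hl0, ← sq_abs, ← Real.rpow_natCast |(l:ℝ)| 2]
        norm_num
      have e3 : p ^ ((1 : ℝ) / 4) * p ^ ((3 : ℝ) / 4) = p := by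
        rw [← Real.rpow_add hp0]; norm_num
      have h1 : m * p ^ ((3 : ℝ) / 4) ≤
          p ^ ((1:ℝ)/4) / |(l : ℝ)| ^ ((1 : ℝ) / 2) * p ^ ((3 : ℝ) / 4) :=
        mul_le_mul_of_nonneg_right hmle hp34.le
      have h2 : p ^ ((1:ℝ)/4) / |(l : ℝ)| ^ ((1 : ℝ) / 2) * p ^ ((3 : ℝ) / 4)
          = p / |(l : ℝ)| ^ ((1 : ℝ) / 2) := by
        rw [div_mul_eq_mul_div, e3]
      have h3 : p / |(l : ℝ)| ^ ((1 : ℝ) / 2) ≤ 2 * |(l : ℝ)| ^ ((3 : ℝ) / 2) := by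
        rw [div_le_iff₀ hl12]
        calc p ≤ 2 * (l : ℝ) ^ 2 := hple
          _ = 2 * (|(l : ℝ)| ^ ((3 : ℝ) / 2) * |(l : ℝ)| ^ ((1 : ℝ) / 2)) := by rw [e2]
          _ = 2 * |(l : ℝ)| ^ ((3 : ℝ) / 2) * |(l : ℝ)| ^ ((1 : ℝ) / 2) := by ring
      linarith
    have : m * p ^ ((3 : ℝ) / 4) / Real.sqrt ph ≤
        2 * (|(l : ℝ)| ^ ((3 : ℝ) / 2) / Real.sqrt ph) := by
      rw [div_le_iff₀ hsph, ← mul_div_assoc, div_mul_cancel₀ _ hsph.ne']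
      exact hkey
    nlinarith [mul_pos hν' hp14]
end

section
/- Let k be a nonzero integer, l an integer, and s ∈ ℝ, and set p := k² + s² + l² and p_h := k² + s². Suppose m > 0 satisfies m ≤ p^{1/4}/(k²+l²)^{1/4}. Then m·p^{1/4}·p_h^{−1/2} ≤ √2·( (k²+l²)^{−1/4} + |l|/(√p_h·(k²+l²)^{1/4}) ). -/
/-- Multiplier inequality (multi2): if `m > 0` with `m ≤ p^{1/4}/(k²+l²)^{1/4}`,
where `p = k² + s² + l²` and `p_h = k² + s²`, then
`m·p^{1/4}/√p_h ≤ √2((k²+l²)^{−1/4} + |l|/(√p_h·(k²+l²)^{1/4}))`. -/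
theorem stmt_18 (k : ℤ) (hk : k ≠ 0) (l : ℤ) (s : ℝ)
    (p ph m : ℝ)
    (hp : p = (k : ℝ) ^ 2 + s ^ 2 + (l : ℝ) ^ 2)
    (hph : ph = (k : ℝ) ^ 2 + s ^ 2)
    (hm : 0 < m)
    (hm2 : m ≤ p ^ ((1 : ℝ) / 4) / ((k : ℝ) ^ 2 + (l : ℝ) ^ 2) ^ ((1 : ℝ) / 4)) :
    m * p ^ ((1 : ℝ) / 4) / Real.sqrt ph ≤
      Real.sqrt 2 * (((k : ℝ) ^ 2 + (l : ℝ) ^ 2) ^ (-(1 : ℝ) / 4) +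
        |(l : ℝ)| / (Real.sqrt ph * ((k : ℝ) ^ 2 + (l : ℝ) ^ 2) ^ ((1 : ℝ) / 4))) := by
  have hk1 : (1 : ℝ) ≤ (k : ℝ) ^ 2 := by
    have h := Int.one_le_abs (show k ≠ 0 from hk)
    have : (1 : ℤ) ≤ k ^ 2 := by nlinarith [sq_abs k]
    exact_mod_cast this
  set q : ℝ := (k : ℝ) ^ 2 + (l : ℝ) ^ 2 with hq
  have hq0 : 0 < q := by positivity
  have hph0 : 0 < ph := by rw [hph]; positivity
  have hp0 : 0 < p := by rw [hp]; positivity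
  have hq4 : 0 < q ^ ((1 : ℝ) / 4) := Real.rpow_pos_of_pos hq0 _
  have hp4 : 0 < p ^ ((1 : ℝ) / 4) := Real.rpow_pos_of_pos hp0 _
  have hsph : 0 < Real.sqrt ph := Real.sqrt_pos.2 hph0
  -- step 1 : m * p^{1/4} ≤ √p / q^{1/4}
  have h1 : m * p ^ ((1 : ℝ) / 4) ≤ Real.sqrt p / q ^ ((1 : ℝ) / 4) := by
    have : m * p ^ ((1 : ℝ) / 4) ≤
        (p ^ ((1 : ℝ) / 4) / q ^ ((1 : ℝ) / 4)) * p ^ ((1 : ℝ) / 4) :=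
      mul_le_mul_of_nonneg_right hm2 hp4.le
    calc m * p ^ ((1 : ℝ) / 4) ≤
        (p ^ ((1 : ℝ) / 4) / q ^ ((1 : ℝ) / 4)) * p ^ ((1 : ℝ) / 4) := this
      _ = p ^ ((1 : ℝ) / 4) * p ^ ((1 : ℝ) / 4) / q ^ ((1 : ℝ) / 4) := by ring
      _ = Real.sqrt p / q ^ ((1 : ℝ) / 4) := by
          rw [← Real.rpow_add hp0, Real.sqrt_eq_rpow]; norm_num
  -- step 2 : √p ≤ √ph + |l|
  have h2 : Real.sqrt p ≤ Real.sqrt ph + |(l : ℝ)| := by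
    have hle : p ≤ (Real.sqrt ph + |(l : ℝ)|) ^ 2 := by
      have hsq : Real.sqrt ph ^ 2 = ph := Real.sq_sqrt hph0.le
      have habs : |(l : ℝ)| ^ 2 = (l : ℝ) ^ 2 := sq_abs _
      nlinarith [abs_nonneg ((l : ℝ)), hsph.le, hp, hph]
    calc Real.sqrt p ≤ Real.sqrt ((Real.sqrt ph + |(l : ℝ)|) ^ 2) :=
          Real.sqrt_le_sqrt hle
      _ = Real.sqrt ph + |(l : ℝ)| := Real.sqrt_sq (by positivity)
  -- combine
  have h3 : m * p ^ ((1 : ℝ) / 4) / Real.sqrt ph ≤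
      q ^ (-(1 : ℝ) / 4) + |(l : ℝ)| / (Real.sqrt ph * q ^ ((1 : ℝ) / 4)) := by
    have hneg : q ^ (-(1 : ℝ) / 4) = 1 / q ^ ((1 : ℝ) / 4) := by
      rw [neg_div, Real.rpow_neg hq0.le]; norm_num
    have : m * p ^ ((1 : ℝ) / 4) / Real.sqrt ph ≤
        (Real.sqrt ph + |(l : ℝ)|) / q ^ ((1 : ℝ) / 4) / Real.sqrt ph := by
      apply div_le_div_of_nonneg_right _ hsph.le
      exact h1.trans (div_le_div_of_nonneg_right h2 hq4.le)
    calc m * p ^ ((1 : ℝ) / 4) / Real.sqrt ph ≤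
        (Real.sqrt ph + |(l : ℝ)|) / q ^ ((1 : ℝ) / 4) / Real.sqrt ph := this
      _ = 1 / q ^ ((1 : ℝ) / 4) + |(l : ℝ)| / (Real.sqrt ph * q ^ ((1 : ℝ) / 4)) := by
          rw [div_div, add_div]
          congr 1
          · rw [mul_comm, div_mul_cancel_left₀ hsph.ne']; norm_num
          · rw [mul_comm]
      _ = q ^ (-(1 : ℝ) / 4) + |(l : ℝ)| / (Real.sqrt ph * q ^ ((1 : ℝ) / 4)) := by
          rw [hneg]
  have hrhs : 0 ≤ q ^ (-(1 : ℝ) / 4) + |(l : ℝ)| / (Real.sqrt ph * q ^ ((1 : ℝ) / 4)) := by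
    positivity
  have h2' : (1 : ℝ) ≤ Real.sqrt 2 := by
    rw [show (1 : ℝ) = Real.sqrt 1 from (Real.sqrt_one).symm]
    exact Real.sqrt_le_sqrt (by norm_num)
  calc m * p ^ ((1 : ℝ) / 4) / Real.sqrt ph ≤
      q ^ (-(1 : ℝ) / 4) + |(l : ℝ)| / (Real.sqrt ph * q ^ ((1 : ℝ) / 4)) := h3
    _ ≤ Real.sqrt 2 * (q ^ (-(1 : ℝ) / 4) + |(l : ℝ)| / (Real.sqrt ph * q ^ ((1 : ℝ) / 4))) := by
        nlinarith
end
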